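/- arXiv:1910.02822 — 8 statements merged into one kernel-verified Lean document; each statement's English description precedes it below -/
import Mathlib

section
/- Let C be an n×m real cost matrix, λ > 0, and let r ∈ ℝ^n, c ∈ ℝ^m be probability vectors with strictly positive entries. A matrix P ∈ U(r,c) minimizes ⟨C,P⟩ − (1/λ)H(P) over U(r,c) if and only if there exist strictly positive vectors u ∈ ℝ^n and v ∈ ℝ^m such that P_ij = u_i · e^{−λ C_ij} · v_j for all i,j; i.e., the Sinkhorn plan is a diagonal scaling of the matrix e^{−λC}. -/
/-- The entropy-regularized transport objective `⟨C,P⟩ − (1/λ)H(P)`,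
where `H(P) = −Σ_{ij} P_ij log P_ij` (with `0 log 0 = 0`). -/
noncomputable def eotObjective {n m : ℕ} (C : Matrix (Fin n) (Fin m) ℝ) (lam : ℝ)
    (P : Matrix (Fin n) (Fin m) ℝ) : ℝ :=
  (∑ i, ∑ j, C i j * P i j) - (1 / lam) * (-(∑ i, ∑ j, P i j * Real.log (P i j)))

/-- `U(r,c)`: nonnegative matrices with row sums `r` and column sums `c`. -/
def transportPolytope {n m : ℕ} (r : Fin n → ℝ) (c : Fin m → ℝ) :
    Set (Matrix (Fin n) (Fin m) ℝ) :=
  {P | (∀ i j, 0 ≤ P i j) ∧ (∀ i, ∑ j, P i j = r i) ∧ (∀ j, ∑ i, P i j = c j)}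


/-!
Write `f(P) = ⟨C,P⟩ + λ⁻¹ Σ P_ij log P_ij`. If `λ C_ij + log P_ij = a_i + b_j`, then on
`U(r,c)` the part `Σ (a_i + b_j) Q_ij` is constant, so
`λ (f Q - f P) = Σ Q_ij log (Q_ij / P_ij) ≥ 0` by Gibbs' inequality.

Conversely, a minimiser has no zero entry: if `P_ij = 0`, replacing `P` by `(1 - t) P + t r cᵀ`
changes `f` by at most `t (f (r cᵀ) - f P) + λ⁻¹ r_i c_j t log t`, which is negative for small
`t`. At a positive minimiser the derivative of `f` along every direction with zero row and
column sums vanishes; the directions `(e_i - e_i')(e_j - e_j')ᵀ` show that `λ C_ij + log P_ij`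
is of the form `a_i + b_j`.
-/

open Real Finset Filter Topology Matrix

lemma sub_le_mul_log_sub_mul_log {p q : ℝ} (hp : 0 < p) (hq : 0 ≤ q) :
    q - p ≤ q * log q - q * log p := by
  rcases hq.eq_or_lt with rfl | hq
  · simpa using hp.le
  have h := mul_le_mul_of_nonneg_left (self_sub_one_le_mul_log (div_nonneg hq.le hp.le)) hp.le
  rw [log_div hq.ne' hp.ne'] at h
  field_simp at h
  linarith

lemma exists_add_of_add_add_eq {α β G : Type*} [AddCommGroup G] (f : α → β → G)
    (hf : ∀ i i' j j', f i j + f i' j' = f i j' + f i' j) :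
    ∃ (a : α → G) (b : β → G), ∀ i j, f i j = a i + b j := by
  rcases isEmpty_or_nonempty β with hβ | ⟨⟨j₀⟩⟩
  · exact ⟨0, 0, fun _ j => isEmptyElim j⟩
  rcases isEmpty_or_nonempty α with hα | ⟨⟨i₀⟩⟩
  · exact ⟨0, 0, fun i => isEmptyElim i⟩
  refine ⟨fun i => f i j₀, fun j => f i₀ j - f i₀ j₀, fun i j => ?_⟩
  show f i j = f i j₀ + (f i₀ j - f i₀ j₀)
  rw [← add_sub_assoc, ← hf, add_sub_cancel_right]

lemma sum_sum_mul_vecMulVec_single_sub_single {α β R : Type*} [Fintype α] [Fintype β]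
    [DecidableEq α] [DecidableEq β] [CommRing R] (G : Matrix α β R) (i i' : α) (j j' : β) :
    ∑ a, ∑ b, G a b *
        vecMulVec (Pi.single i 1 - Pi.single i' 1) (Pi.single j 1 - Pi.single j' 1) a b =
      G i j + G i' j' - G i j' - G i' j := by
  simp only [vecMulVec_apply, Pi.sub_apply, Pi.single_apply, mul_sub, mul_ite, mul_one, mul_zero,
    sum_sub_distrib, sum_ite_eq', mem_univ, ↓reduceIte]
  ring

lemma exists_diagonal_scaling_iff {α β : Type*} (C P : Matrix α β ℝ) (lam : ℝ) :
    (∃ (u : α → ℝ) (v : β → ℝ), (∀ i, 0 < u i) ∧ (∀ j, 0 < v j) ∧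
        ∀ i j, P i j = u i * exp (-lam * C i j) * v j) ↔
      (∀ i j, 0 < P i j) ∧
        ∃ (a : α → ℝ) (b : β → ℝ), ∀ i j, lam * C i j + log (P i j) = a i + b j := by
  constructor
  · rintro ⟨u, v, hu, hv, hP⟩
    have hue : ∀ i j, 0 < u i * exp (-lam * C i j) := fun i j => mul_pos (hu i) (exp_pos _)
    refine ⟨fun i j => hP i j ▸ mul_pos (hue i j) (hv j), log ∘ u, log ∘ v, fun i j => ?_⟩
    rw [hP, log_mul (hue i j).ne' (hv j).ne', log_mul (hu i).ne' (exp_pos _).ne', log_exp]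
    simp only [Function.comp_apply]
    ring
  · rintro ⟨hpos, a, b, hab⟩
    refine ⟨exp ∘ a, exp ∘ b, fun i => exp_pos _, fun j => exp_pos _, fun i j => ?_⟩
    simp only [Function.comp_apply, ← exp_add]
    rw [← exp_log (hpos i j)]
    congr 1
    linarith [hab i j]

variable {n m : ℕ} {r : Fin n → ℝ} {c : Fin m → ℝ}

lemma convex_transportPolytope (r : Fin n → ℝ) (c : Fin m → ℝ) :
    Convex ℝ (transportPolytope r c) := by
  rintro P ⟨hP₀, hPr, hPc⟩ Q ⟨hQ₀, hQr, hQc⟩ s t hs ht hst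
  refine ⟨fun i j => ?_, fun i => ?_, fun j => ?_⟩
  · simp only [Matrix.add_apply, Matrix.smul_apply, smul_eq_mul]
    exact add_nonneg (mul_nonneg hs (hP₀ i j)) (mul_nonneg ht (hQ₀ i j))
  · simp [sum_add_distrib, ← mul_sum, hPr, hQr, ← add_mul, hst]
  · simp [sum_add_distrib, ← mul_sum, hPc, hQc, ← add_mul, hst]

lemma vecMulVec_mem_transportPolytope (hr : ∀ i, 0 ≤ r i) (hc : ∀ j, 0 ≤ c j)
    (hr1 : ∑ i, r i = 1) (hc1 : ∑ j, c j = 1) : vecMulVec r c ∈ transportPolytope r c :=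
  ⟨fun i j => mul_nonneg (hr i) (hc j), fun i => by simp [vecMulVec_apply, ← mul_sum, hc1],
    fun j => by simp [vecMulVec_apply, ← sum_mul, hr1]⟩

lemma sum_sum_add_mul_of_mem_transportPolytope {Q : Matrix (Fin n) (Fin m) ℝ}
    (hQ : Q ∈ transportPolytope r c) (a : Fin n → ℝ) (b : Fin m → ℝ) :
    ∑ i, ∑ j, (a i + b j) * Q i j = ∑ i, a i * r i + ∑ j, b j * c j := by
  simp only [add_mul, sum_add_distrib, ← mul_sum, hQ.2.1]
  rw [sum_comm]
  simp only [← mul_sum, hQ.2.2]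

lemma eventually_add_smul_mem_transportPolytope {P D : Matrix (Fin n) (Fin m) ℝ}
    (hP : P ∈ transportPolytope r c) (hpos : ∀ i j, 0 < P i j)
    (hDr : ∀ i, ∑ j, D i j = 0) (hDc : ∀ j, ∑ i, D i j = 0) :
    ∀ᶠ t : ℝ in 𝓝 0, P + t • D ∈ transportPolytope r c := by
  have hentry : ∀ᶠ t : ℝ in 𝓝 0, ∀ i j, 0 < P i j + t * D i j := by
    refine eventually_all.2 fun i => eventually_all.2 fun j => ?_
    have : Tendsto (fun t : ℝ => P i j + t * D i j) (𝓝 0) (𝓝 (P i j)) := by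
      simpa using ((tendsto_id (x := 𝓝 (0 : ℝ))).mul_const (D i j)).const_add (P i j)
    exact this.eventually (eventually_gt_nhds (hpos i j))
  filter_upwards [hentry] with t ht
  refine ⟨fun i j => (ht i j).le, fun i => ?_, fun j => ?_⟩
  · simp [sum_add_distrib, ← mul_sum, hP.2.1, hDr]
  · simp [sum_add_distrib, ← mul_sum, hP.2.2, hDc]

lemma eotObjective_eq_sum (C : Matrix (Fin n) (Fin m) ℝ) (lam : ℝ)
    (P : Matrix (Fin n) (Fin m) ℝ) :
    eotObjective C lam P = ∑ i, ∑ j, (C i j * P i j + P i j * log (P i j) / lam) := by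
  simp only [eotObjective, sum_add_distrib, ← sum_div]
  ring

lemma hasDerivAt_eotObjective_add_smul (C : Matrix (Fin n) (Fin m) ℝ) (lam : ℝ)
    {P : Matrix (Fin n) (Fin m) ℝ} (hP : ∀ i j, 0 < P i j) (D : Matrix (Fin n) (Fin m) ℝ) :
    HasDerivAt (fun t : ℝ => eotObjective C lam (P + t • D))
      (∑ i, ∑ j, (C i j + (log (P i j) + 1) / lam) * D i j) 0 := by
  simp only [eotObjective_eq_sum, Matrix.add_apply, Matrix.smul_apply, smul_eq_mul]
  refine HasDerivAt.fun_sum fun i _ => HasDerivAt.fun_sum fun j _ => ?_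
  have hline : HasDerivAt (fun t : ℝ => P i j + t * D i j) (D i j) 0 := by
    simpa using ((hasDerivAt_id (0 : ℝ)).mul_const (D i j)).const_add (P i j)
  have hentry : HasDerivAt (fun x => C i j * x + x * log x / lam)
      (C i j + (log (P i j) + 1) / lam) (P i j + 0 * D i j) := by
    rw [zero_mul, add_zero]
    simpa using ((hasDerivAt_id' _).const_mul (C i j)).fun_add
      ((hasDerivAt_mul_log (hP i j).ne').div_const lam)
  exact hentry.comp 0 hline

lemma sum_sum_mul_eq_zero_of_isMinOn {C P D : Matrix (Fin n) (Fin m) ℝ} {lam : ℝ}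
    (hlam : lam ≠ 0) (hP : P ∈ transportPolytope r c) (hpos : ∀ i j, 0 < P i j)
    (hmin : IsMinOn (eotObjective C lam) (transportPolytope r c) P)
    (hDr : ∀ i, ∑ j, D i j = 0) (hDc : ∀ j, ∑ i, D i j = 0) :
    ∑ i, ∑ j, (lam * C i j + log (P i j)) * D i j = 0 := by
  have hloc : IsLocalMin (fun t : ℝ => eotObjective C lam (P + t • D)) 0 := by
    filter_upwards [eventually_add_smul_mem_transportPolytope hP hpos hDr hDc] with t ht
    simpa using isMinOn_iff.1 hmin _ ht
  have hderiv := hloc.hasDerivAt_eq_zero (hasDerivAt_eotObjective_add_smul C lam hpos D)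
  calc ∑ i, ∑ j, (lam * C i j + log (P i j)) * D i j
      = lam * ∑ i, ∑ j, (C i j + (log (P i j) + 1) / lam) * D i j - ∑ i, ∑ j, D i j := by
        simp only [mul_sum, ← sum_sub_distrib]
        refine sum_congr rfl fun i _ => sum_congr rfl fun j _ => ?_
        field_simp
        ring
    _ = 0 := by simp [hderiv, hDr]

lemma eotObjective_segment_le {C P R : Matrix (Fin n) (Fin m) ℝ} {lam t : ℝ} (hlam : 0 < lam)
    (hP : ∀ i j, 0 ≤ P i j) (hR : ∀ i j, 0 ≤ R i j) {i₀ : Fin n} {j₀ : Fin m}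
    (hz : P i₀ j₀ = 0) (ht₀ : 0 < t) (ht₁ : t ≤ 1) :
    eotObjective C lam ((1 - t) • P + t • R) ≤
      (1 - t) * eotObjective C lam P + t * eotObjective C lam R +
        R i₀ j₀ * (t * log t) / lam := by
  have hentry : ∀ i j, ((1 - t) * P i j + t * R i j) * log ((1 - t) * P i j + t * R i j) ≤
      (1 - t) * (P i j * log (P i j)) + t * (R i j * log (R i j)) +
        if j = j₀ ∧ i = i₀ then R i₀ j₀ * (t * log t) else 0 := by
    intro i j
    split_ifs with h
    · obtain ⟨rfl, rfl⟩ := h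
      have := negMulLog_mul t (R i j)
      simp only [negMulLog, hz, mul_zero, zero_mul, zero_add] at this ⊢
      linarith
    · simpa using convexOn_mul_log.2 (hP i j) (hR i j) (by linarith) ht₀.le (by ring)
  simp only [eotObjective_eq_sum, Matrix.add_apply, Matrix.smul_apply, smul_eq_mul]
  calc _ ≤ ∑ i, ∑ j, ((1 - t) * (C i j * P i j + P i j * log (P i j) / lam) +
          t * (C i j * R i j + R i j * log (R i j) / lam) +
          (if j = j₀ ∧ i = i₀ then R i₀ j₀ * (t * log t) else 0) / lam) := by
        refine sum_le_sum fun i _ => sum_le_sum fun j _ => ?_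
        calc _ ≤ C i j * ((1 - t) * P i j + t * R i j) +
                ((1 - t) * (P i j * log (P i j)) + t * (R i j * log (R i j)) +
                  if j = j₀ ∧ i = i₀ then R i₀ j₀ * (t * log t) else 0) / lam :=
              add_le_add_right (div_le_div_of_nonneg_right (hentry i j) hlam.le) _
          _ = _ := by ring
    _ = _ := by
        simp only [sum_add_distrib, ← mul_sum, ← sum_div, ite_and, Fintype.sum_ite_eq']

lemma pos_of_isMinOn {C P : Matrix (Fin n) (Fin m) ℝ} {lam : ℝ} (hlam : 0 < lam)
    (hr : ∀ i, 0 < r i) (hc : ∀ j, 0 < c j) (hr1 : ∑ i, r i = 1) (hc1 : ∑ j, c j = 1)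
    (hP : P ∈ transportPolytope r c)
    (hmin : IsMinOn (eotObjective C lam) (transportPolytope r c) P) (i : Fin n) (j : Fin m) :
    0 < P i j := by
  refine (hP.1 i j).lt_of_ne fun hz => ?_
  set R := vecMulVec r c
  have hR : R ∈ transportPolytope r c :=
    vecMulVec_mem_transportPolytope (fun i => (hr i).le) (fun j => (hc j).le) hr1 hc1
  have hRij : 0 < R i j / lam := div_pos (mul_pos (hr i) (hc j)) hlam
  have hlog : ∀ t ∈ Set.Ioo (0 : ℝ) 1,
      (eotObjective C lam P - eotObjective C lam R) / (R i j / lam) ≤ log t := by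
    rintro t ⟨ht₀, ht₁⟩
    have hQ := convex_transportPolytope r c hP hR (by linarith : 0 ≤ 1 - t) ht₀.le (by ring)
    have hseg := (isMinOn_iff.1 hmin _ hQ).trans
      (eotObjective_segment_le hlam hP.1 hR.1 hz.symm ht₀ ht₁.le)
    have key : t * (eotObjective C lam P - eotObjective C lam R) ≤
        t * (R i j / lam * log t) := by
      have : R i j * (t * log t) / lam = t * (R i j / lam * log t) := by ring
      linarith
    rw [div_le_iff₀' hRij]
    exact le_of_mul_le_mul_left key ht₀
  obtain ⟨t, hlt, ht⟩ := ((tendsto_log_nhdsGT_zero.eventually (eventually_lt_atBot _)).and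
    (Ioo_mem_nhdsGT one_pos)).exists
  exact (hlog t ht).not_gt hlt

lemma isMinOn_eotObjective_of_log_add {C P : Matrix (Fin n) (Fin m) ℝ} {lam : ℝ}
    (hlam : 0 < lam) (hP : P ∈ transportPolytope r c) (hpos : ∀ i j, 0 < P i j)
    {a : Fin n → ℝ} {b : Fin m → ℝ} (hab : ∀ i j, lam * C i j + log (P i j) = a i + b j) :
    IsMinOn (eotObjective C lam) (transportPolytope r c) P := by
  have hscaled : ∀ Q ∈ transportPolytope r c, lam * eotObjective C lam Q =
      (∑ i, a i * r i + ∑ j, b j * c j) +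
        ∑ i, ∑ j, (Q i j * log (Q i j) - Q i j * log (P i j)) := by
    intro Q hQ
    rw [eotObjective_eq_sum, mul_sum, ← sum_sum_add_mul_of_mem_transportPolytope hQ,
      ← sum_add_distrib]
    refine sum_congr rfl fun i _ => ?_
    rw [mul_sum, ← sum_add_distrib]
    refine sum_congr rfl fun j _ => ?_
    rw [← hab]
    field_simp
    ring
  refine isMinOn_iff.2 fun Q hQ => le_of_mul_le_mul_left ?_ hlam
  have hmass : ∑ i, ∑ j, (Q i j - P i j) = 0 := by simp [sum_sub_distrib, hQ.2.1, hP.2.1]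
  have hgibbs : ∑ i, ∑ j, (Q i j - P i j) ≤
      ∑ i, ∑ j, (Q i j * log (Q i j) - Q i j * log (P i j)) :=
    sum_le_sum fun i _ => sum_le_sum fun j _ => sub_le_mul_log_sub_mul_log (hpos i j) (hQ.1 i j)
  rw [hscaled Q hQ, hscaled P hP]
  simp only [sub_self, sum_const_zero]
  linarith

lemma exists_log_add_of_isMinOn {C P : Matrix (Fin n) (Fin m) ℝ} {lam : ℝ} (hlam : lam ≠ 0)
    (hP : P ∈ transportPolytope r c) (hpos : ∀ i j, 0 < P i j)
    (hmin : IsMinOn (eotObjective C lam) (transportPolytope r c) P) :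
    ∃ (a : Fin n → ℝ) (b : Fin m → ℝ),
      ∀ i j, lam * C i j + log (P i j) = a i + b j := by
  refine exists_add_of_add_add_eq _ fun i i' j j' => ?_
  have h := sum_sum_mul_eq_zero_of_isMinOn hlam hP hpos hmin
    (D := vecMulVec (Pi.single i 1 - Pi.single i' 1) (Pi.single j 1 - Pi.single j' 1))
    (fun _ => by simp [vecMulVec_apply, ← mul_sum, sum_sub_distrib])
    (fun _ => by simp [vecMulVec_apply, ← sum_mul, sum_sub_distrib])
  have hswap := sum_sum_mul_vecMulVec_single_sub_single
    (fun a b => lam * C a b + log (P a b)) i i' j j'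
  linear_combination h - hswap

/-- `P ∈ U(r,c)` minimizes `⟨C,P⟩ − (1/λ)H(P)` over `U(r,c)` iff there are strictly
positive vectors `u`, `v` with `P_ij = u_i · e^{−λ C_ij} · v_j` for all `i, j`. -/
theorem sinkhorn_plan_iff_diagonal_scaling {n m : ℕ} (C : Matrix (Fin n) (Fin m) ℝ)
    (lam : ℝ) (hlam : 0 < lam) (r : Fin n → ℝ) (c : Fin m → ℝ)
    (hr : ∀ i, 0 < r i) (hc : ∀ j, 0 < c j)
    (hr1 : ∑ i, r i = 1) (hc1 : ∑ j, c j = 1)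
    (P : Matrix (Fin n) (Fin m) ℝ) (hP : P ∈ transportPolytope r c) :
    (∀ Q ∈ transportPolytope r c, eotObjective C lam P ≤ eotObjective C lam Q) ↔
      ∃ (u : Fin n → ℝ) (v : Fin m → ℝ), (∀ i, 0 < u i) ∧ (∀ j, 0 < v j) ∧
        ∀ i j, P i j = u i * Real.exp (-lam * C i j) * v j := by
  rw [← isMinOn_iff, exists_diagonal_scaling_iff]
  constructor
  · intro hmin
    have hpos := pos_of_isMinOn hlam hr hc hr1 hc1 hP hmin
    exact ⟨hpos, exists_log_add_of_isMinOn hlam.ne' hP hpos hmin⟩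
  · rintro ⟨hpos, a, b, hab⟩
    exact isMinOn_eotObjective_of_log_add hlam hP hpos hab
end

section
/- Let A and B be n×m matrices with strictly positive entries such that A_ij = u_i · B_ij · v_j for some strictly positive vectors u ∈ ℝ^n, v ∈ ℝ^m (i.e., A and B are diagonally equivalent). Then for any probability vectors r ∈ ℝ^n and c ∈ ℝ^m, a matrix P ∈ U(r,c) minimizes D_KL(P‖A) over U(r,c) if and only if it minimizes D_KL(P‖B) over U(r,c). -/
/-- Relative entropy `D_KL(P‖M) = Σ_{ij} P_ij log(P_ij/M_ij)` (real-valued version,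
with `0 log 0 = 0`; adequate when `M` has strictly positive entries). -/
noncomputable def klReal {n m : ℕ} (P M : Matrix (Fin n) (Fin m) ℝ) : ℝ :=
  ∑ i, ∑ j, P i j * Real.log (P i j / M i j)

lemma klReal_shift {n m : ℕ}
    (A B : Matrix (Fin n) (Fin m) ℝ)
    (hB : ∀ i j, 0 < B i j)
    (u : Fin n → ℝ) (v : Fin m → ℝ) (hu : ∀ i, 0 < u i) (hv : ∀ j, 0 < v j)
    (hAB : ∀ i j, A i j = u i * B i j * v j)
    (r : Fin n → ℝ) (c : Fin m → ℝ)
    (Q : Matrix (Fin n) (Fin m) ℝ) (hQ : Q ∈ transportPolytope r c) :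
    klReal Q A = klReal Q B - ((∑ i, r i * Real.log (u i)) + ∑ j, c j * Real.log (v j)) := by
  obtain ⟨hQ0, hQr, hQc⟩ := hQ
  have key : ∀ i j, Q i j * Real.log (Q i j / A i j)
      = Q i j * Real.log (Q i j / B i j) - Q i j * Real.log (u i) - Q i j * Real.log (v j) := by
    intro i j
    rcases eq_or_lt_of_le (hQ0 i j) with h | h
    · simp [← h]
    · have h1 := hu i; have h2 := hB i j; have h3 := hv j
      rw [hAB i j]
      rw [Real.log_div h.ne' (by positivity), Real.log_div h.ne' (hB i j).ne',
        Real.log_mul (by positivity) (hv j).ne', Real.log_mul (hu i).ne' (hB i j).ne']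
      ring
  unfold klReal
  have h1 : ∑ i, ∑ j, Q i j * Real.log (Q i j / A i j)
      = (∑ i, ∑ j, Q i j * Real.log (Q i j / B i j))
        - (∑ i, ∑ j, Q i j * Real.log (u i)) - (∑ i, ∑ j, Q i j * Real.log (v j)) := by
    rw [← Finset.sum_sub_distrib, ← Finset.sum_sub_distrib]
    refine Finset.sum_congr rfl fun i _ => ?_
    rw [← Finset.sum_sub_distrib, ← Finset.sum_sub_distrib]
    exact Finset.sum_congr rfl fun j _ => key i j
  rw [h1]
  have h2 : ∑ i, ∑ j, Q i j * Real.log (u i) = ∑ i, r i * Real.log (u i) := by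
    refine Finset.sum_congr rfl fun i _ => ?_
    rw [← Finset.sum_mul, hQr i]
  have h3 : ∑ i, ∑ j, Q i j * Real.log (v j) = ∑ j, c j * Real.log (v j) := by
    rw [Finset.sum_comm]
    refine Finset.sum_congr rfl fun j _ => ?_
    rw [← Finset.sum_mul, hQc j]
  rw [h2, h3]; ring

/-- If `A` and `B` are diagonally equivalent positive matrices
(`A_ij = u_i B_ij v_j` with `u, v` strictly positive), then for any probability
vectors `r`, `c`, a matrix `P ∈ U(r,c)` minimizes `D_KL(P‖A)` over `U(r,c)`
iff it minimizes `D_KL(P‖B)` over `U(r,c)`. -/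
theorem kl_minimizer_invariant_of_diag_equiv {n m : ℕ}
    (A B : Matrix (Fin n) (Fin m) ℝ)
    (hA : ∀ i j, 0 < A i j) (hB : ∀ i j, 0 < B i j)
    (u : Fin n → ℝ) (v : Fin m → ℝ) (hu : ∀ i, 0 < u i) (hv : ∀ j, 0 < v j)
    (hAB : ∀ i j, A i j = u i * B i j * v j)
    (r : Fin n → ℝ) (c : Fin m → ℝ) (hr0 : ∀ i, 0 ≤ r i) (hc0 : ∀ j, 0 ≤ c j)
    (hr1 : ∑ i, r i = 1) (hc1 : ∑ j, c j = 1)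
    (P : Matrix (Fin n) (Fin m) ℝ) (hP : P ∈ transportPolytope r c) :
    (∀ Q ∈ transportPolytope r c, klReal P A ≤ klReal Q A) ↔
    (∀ Q ∈ transportPolytope r c, klReal P B ≤ klReal Q B) := by
  constructor
  · intro h Q hQ
    have := h Q hQ
    rw [klReal_shift A B hB u v hu hv hAB r c P hP,
      klReal_shift A B hB u v hu hv hAB r c Q hQ] at this
    linarith
  · intro h Q hQ
    have := h Q hQ
    rw [klReal_shift A B hB u v hu hv hAB r c P hP,
      klReal_shift A B hB u v hu hv hAB r c Q hQ]
    linarith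
end

section
/- (Sinkhorn's theorem, existence.) Let M be an n×m matrix with strictly positive entries, and let r ∈ ℝ^n, c ∈ ℝ^m be vectors with strictly positive entries satisfying Σ_i r_i = Σ_j c_j. Then there exist strictly positive vectors u ∈ ℝ^n and v ∈ ℝ^m such that the matrix P with P_ij = u_i · M_ij · v_j has row sums equal to r and column sums equal to c. -/
/-!
With `u i := r i / ∑ j, M i j * exp (y j)` and `v j := exp (y j)` the row sums are `r` for every
`y`, and the column sums are `c` exactly when `y` is a critical point of the potential
`G y = ∑ i, r i * log (∑ j, M i j * exp (y j)) - ∑ j, c j * y j`. Because `∑ r = ∑ c`, `G` is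
invariant under adding a constant to `y`, and it grows at least like `min c · (max y - min y)`;
so after normalising `min y = 0` its minimum is attained on a compact box.
-/

open Real Finset

theorem exists_forall_le_of_isCompact {X α : Type*} [TopologicalSpace X] [LinearOrder α]
    [TopologicalSpace α] [ClosedIicTopology α] {f : X → α} {K : Set X} (hK : IsCompact K)
    (hf : ContinuousOn f K) {x₀ : X} (hx₀ : x₀ ∈ K)
    (h : ∀ x, f x < f x₀ → ∃ x' ∈ K, f x' ≤ f x) : ∃ p, ∀ x, f p ≤ f x := by
  obtain ⟨p, -, hp⟩ := hK.exists_isMinOn ⟨x₀, hx₀⟩ hf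
  refine ⟨p, fun x => ?_⟩
  rcases lt_or_ge (f x) (f x₀) with hx | hx
  · obtain ⟨x', hx'K, hx'⟩ := h x hx
    exact (hp hx'K).trans hx'
  · exact (hp hx₀).trans hx

namespace Sinkhorn

variable {ι κ : Type*} [Fintype ι] [Fintype κ] {M : Matrix ι κ ℝ} {r : ι → ℝ} {c : κ → ℝ}

noncomputable def potential (M : Matrix ι κ ℝ) (r : ι → ℝ) (c : κ → ℝ) (y : κ → ℝ) : ℝ :=
  ∑ i, r i * log (∑ j, M i j * exp (y j)) - ∑ j, c j * y j

theorem sum_mul_exp_pos [Nonempty κ] {a : κ → ℝ} (ha : ∀ j, 0 < a j) (y : κ → ℝ) :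
    0 < ∑ j, a j * exp (y j) :=
  sum_pos (fun j _ => mul_pos (ha j) (exp_pos _)) univ_nonempty

theorem continuous_potential [Nonempty κ] (hM : ∀ i j, 0 < M i j) :
    Continuous (potential M r c) :=
  (continuous_finsetSum _ fun i _ => continuous_const.mul
    ((Continuous.log (by fun_prop)) fun y => (sum_mul_exp_pos (hM i) y).ne')).sub (by fun_prop)

theorem potential_add_const [Nonempty κ] (hM : ∀ i j, 0 < M i j)
    (hsum : ∑ i, r i = ∑ j, c j) (y : κ → ℝ) (t : ℝ) :
    potential M r c (fun j => y j + t) = potential M r c y := by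
  have hrow : ∀ i, log (∑ j, M i j * exp (y j + t)) = t + log (∑ j, M i j * exp (y j)) := by
    intro i
    have : ∑ j, M i j * exp (y j + t) = exp t * ∑ j, M i j * exp (y j) := by
      rw [mul_sum]
      exact sum_congr rfl fun j _ => by rw [exp_add]; ring
    rw [this, log_mul (exp_pos t).ne' (sum_mul_exp_pos (hM i) y).ne', log_exp]
  simp only [potential, hrow, mul_add, sum_add_distrib, ← sum_mul, hsum]
  ring

theorem potential_lower_bound (hM : ∀ i j, 0 < M i j) (hr : ∀ i, 0 ≤ r i)
    (hc : ∀ j, 0 ≤ c j) (hsum : ∑ i, r i = ∑ j, c j) {y : κ → ℝ} {j₀ : κ}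
    (hj₀ : ∀ j, y j ≤ y j₀) (j₁ : κ) :
    ∑ i, r i * log (M i j₀) + c j₁ * (y j₀ - y j₁) ≤ potential M r c y := by
  have hlog : ∀ i, log (M i j₀) + y j₀ ≤ log (∑ j, M i j * exp (y j)) := by
    intro i
    rw [← log_exp (y j₀), ← log_mul (hM i j₀).ne' (exp_pos _).ne']
    exact log_le_log (mul_pos (hM i j₀) (exp_pos _))
      (single_le_sum (fun j _ => (mul_pos (hM i j) (exp_pos _)).le) (mem_univ j₀))
  have hgap : c j₁ * (y j₀ - y j₁) ≤ ∑ j, c j * (y j₀ - y j) :=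
    single_le_sum (f := fun j => c j * (y j₀ - y j))
      (fun j _ => mul_nonneg (hc j) (sub_nonneg.2 (hj₀ j))) (mem_univ j₁)
  calc ∑ i, r i * log (M i j₀) + c j₁ * (y j₀ - y j₁)
      ≤ ∑ i, r i * (log (M i j₀) + y j₀) - ∑ j, c j * y j := by
        simp only [mul_add, mul_sub, sum_add_distrib, sum_sub_distrib, ← sum_mul, hsum] at hgap ⊢
        linarith
    _ ≤ potential M r c y :=
        sub_le_sub_right (sum_le_sum fun i _ => mul_le_mul_of_nonneg_left (hlog i) (hr i)) _

theorem hasDerivAt_potential_line [Nonempty κ] (hM : ∀ i j, 0 < M i j) (y d : κ → ℝ) :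
    HasDerivAt (fun t : ℝ => potential M r c (y + t • d))
      (∑ i, r i * ((∑ j, M i j * exp (y j) * d j) / ∑ j, M i j * exp (y j))
        - ∑ j, c j * d j) 0 := by
  have hexp : ∀ j, HasDerivAt (fun t : ℝ => exp (y j + t * d j)) (exp (y j) * d j) 0 := by
    intro j
    simpa using (((hasDerivAt_id (0 : ℝ)).mul_const (d j)).const_add (y j)).exp
  have hrow : ∀ i, HasDerivAt (fun t : ℝ => ∑ j, M i j * exp (y j + t * d j))
      (∑ j, M i j * exp (y j) * d j) 0 := by
    intro i
    simpa [mul_assoc] using HasDerivAt.fun_sum fun j _ => (hexp j).const_mul (M i j)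
  have hlin : HasDerivAt (fun t : ℝ => ∑ j, c j * (y j + t * d j)) (∑ j, c j * d j) 0 := by
    simpa using HasDerivAt.fun_sum fun j _ =>
      (((hasDerivAt_id (0 : ℝ)).mul_const (d j)).const_add (y j)).const_mul (c j)
  have := (HasDerivAt.fun_sum (u := univ) fun i _ =>
    ((hrow i).log (by simpa using (sum_mul_exp_pos (hM i) y).ne')).const_mul (r i)).fun_sub hlin
  simpa [potential] using this

theorem sum_mul_exp_div_eq_of_forall_le [Nonempty κ] (hM : ∀ i j, 0 < M i j) {y : κ → ℝ}
    (hy : ∀ z, potential M r c y ≤ potential M r c z) (j : κ) :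
    ∑ i, r i * (M i j * exp (y j) / ∑ k, M i k * exp (y k)) = c j := by
  classical
  have hmin : IsLocalMin (fun t : ℝ => potential M r c (y + t • Pi.single j 1)) 0 :=
    Filter.Eventually.of_forall fun t => by simpa using hy (y + t • Pi.single j 1)
  have := hmin.hasDerivAt_eq_zero (hasDerivAt_potential_line hM y (Pi.single j 1))
  simpa [Pi.single_apply, sub_eq_zero] using this

theorem exists_forall_potential_le [Nonempty κ] (hM : ∀ i j, 0 < M i j) (hr : ∀ i, 0 ≤ r i)
    (hc : ∀ j, 0 < c j) (hsum : ∑ i, r i = ∑ j, c j) :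
    ∃ y, ∀ z, potential M r c y ≤ potential M r c z := by
  set G := potential M r c
  set A : κ → ℝ := fun j => ∑ i, r i * log (M i j)
  obtain ⟨L, hL⟩ := Finite.exists_le fun p : κ × κ => (G 0 - A p.1) / c p.2
  refine exists_forall_le_of_isCompact (isCompact_Icc (a := 0) (b := fun _ => max L 0))
    (continuous_potential hM).continuousOn ⟨le_rfl, fun _ => le_max_right _ _⟩ fun z hz => ?_
  obtain ⟨j₁, hj₁⟩ := Finite.exists_min z
  obtain ⟨j₀, hj₀⟩ := Finite.exists_max z
  have hosc : z j₀ - z j₁ ≤ L := by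
    have := potential_lower_bound hM hr (fun j => (hc j).le) hsum hj₀ j₁
    refine le_trans ?_ (hL (j₀, j₁))
    rw [le_div_iff₀ (hc j₁)]
    linarith
  refine ⟨fun j => z j + -z j₁, ⟨fun j => ?_, fun j => ?_⟩, (potential_add_const hM hsum z _).le⟩
  · simpa using hj₁ j
  · simpa using (by linarith [hj₀ j] : z j + -z j₁ ≤ L).trans (le_max_left L 0)

theorem exists_pos_scaling [Nonempty κ] (hM : ∀ i j, 0 < M i j) (hr : ∀ i, 0 < r i)
    (hc : ∀ j, 0 < c j) (hsum : ∑ i, r i = ∑ j, c j) :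
    ∃ (u : ι → ℝ) (v : κ → ℝ), (∀ i, 0 < u i) ∧ (∀ j, 0 < v j) ∧
      (∀ i, ∑ j, u i * M i j * v j = r i) ∧ (∀ j, ∑ i, u i * M i j * v j = c j) := by
  obtain ⟨y, hy⟩ := exists_forall_potential_le hM (fun i => (hr i).le) hc hsum
  refine ⟨fun i => r i / ∑ j, M i j * exp (y j), fun j => exp (y j),
    fun i => div_pos (hr i) (sum_mul_exp_pos (hM i) y), fun j => exp_pos _, fun i => ?_, fun j => ?_⟩
  · simp_rw [mul_assoc, ← mul_sum]
    exact div_mul_cancel₀ _ (sum_mul_exp_pos (hM i) y).ne'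
  · rw [← sum_mul_exp_div_eq_of_forall_le hM hy j]
    exact sum_congr rfl fun i _ => by ring

end Sinkhorn

/-- Sinkhorn's theorem (existence): for a strictly positive `n × m` matrix `M` and
strictly positive vectors `r`, `c` with `Σ_i r_i = Σ_j c_j`, there exist strictly
positive vectors `u`, `v` such that the matrix `P_ij = u_i · M_ij · v_j` has row sums
`r` and column sums `c`. -/
theorem sinkhorn_existence {n m : ℕ} (M : Matrix (Fin n) (Fin m) ℝ)
    (hM : ∀ i j, 0 < M i j) (r : Fin n → ℝ) (c : Fin m → ℝ)
    (hr : ∀ i, 0 < r i) (hc : ∀ j, 0 < c j)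
    (hsum : ∑ i, r i = ∑ j, c j) :
    ∃ (u : Fin n → ℝ) (v : Fin m → ℝ), (∀ i, 0 < u i) ∧ (∀ j, 0 < v j) ∧
      (∀ i, ∑ j, u i * M i j * v j = r i) ∧
      (∀ j, ∑ i, u i * M i j * v j = c j) := by
  rcases isEmpty_or_nonempty (Fin m) with hm | hm
  · have hr0 : ∀ i, r i = 0 := fun i =>
      (sum_eq_zero_iff_of_nonneg fun i _ => (hr i).le).1 (by simp [hsum]) i (mem_univ i)
    exact ⟨fun _ => 1, fun _ => 1, fun _ => one_pos, fun _ => one_pos,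
      fun i => by simp [hr0 i], isEmptyElim⟩
  · exact Sinkhorn.exists_pos_scaling hM hr hc hsum
end

section
/- (Sinkhorn's theorem, uniqueness.) Let M be an n×m matrix with strictly positive entries and let r ∈ ℝ^n, c ∈ ℝ^m have strictly positive entries with Σ_i r_i = Σ_j c_j. If strictly positive vectors (u,v) and (u′,v′) both satisfy that diag(u)·M·diag(v) and diag(u′)·M·diag(v′) have row sums r and column sums c, then there exists d > 0 with u′ = d·u and v′ = (1/d)·v; in particular diag(u)·M·diag(v) = diag(u′)·M·diag(v′), so the scaled matrix is unique. -/
private lemma eq_of_sum_eq_of_le {α : Type*} [Fintype α] {f g : α → ℝ}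
    (hle : ∀ i, f i ≤ g i) (hsum : ∑ i, f i = ∑ i, g i) : ∀ i, f i = g i := by
  intro i
  by_contra h
  have hlt : f i < g i := lt_of_le_of_ne (hle i) h
  have : ∑ j, f j < ∑ j, g j :=
    Finset.sum_lt_sum (fun j _ => hle j) ⟨i, Finset.mem_univ i, hlt⟩
  exact absurd hsum (ne_of_lt this)

/-- Sinkhorn's theorem (uniqueness): if strictly positive scaling pairs `(u,v)` and
`(u',v')` both scale the strictly positive matrix `M` to row sums `r` and column sums
`c`, then `u' = d·u` and `v' = (1/d)·v` for some `d > 0`; in particular the scaled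
matrices coincide. -/
theorem sinkhorn_uniqueness {n m : ℕ} (M : Matrix (Fin n) (Fin m) ℝ)
    (hM : ∀ i j, 0 < M i j) (r : Fin n → ℝ) (c : Fin m → ℝ)
    (hr : ∀ i, 0 < r i) (hc : ∀ j, 0 < c j)
    (hsum : ∑ i, r i = ∑ j, c j)
    (u u' : Fin n → ℝ) (v v' : Fin m → ℝ)
    (hu : ∀ i, 0 < u i) (hv : ∀ j, 0 < v j)
    (hu' : ∀ i, 0 < u' i) (hv' : ∀ j, 0 < v' j)
    (hrow : ∀ i, ∑ j, u i * M i j * v j = r i)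
    (hcol : ∀ j, ∑ i, u i * M i j * v j = c j)
    (hrow' : ∀ i, ∑ j, u' i * M i j * v' j = r i)
    (hcol' : ∀ j, ∑ i, u' i * M i j * v' j = c j) :
    (∃ d : ℝ, 0 < d ∧ (∀ i, u' i = d * u i) ∧ (∀ j, v' j = (1 / d) * v j)) ∧
    (∀ i j, u i * M i j * v j = u' i * M i j * v' j) := by
  -- degenerate cases
  rcases Nat.eq_zero_or_pos m with hm | hm
  · rcases Nat.eq_zero_or_pos n with hn | hn
    · subst hm; subst hn
      exact ⟨⟨1, one_pos, fun i => i.elim0, fun j => j.elim0⟩, fun i => i.elim0⟩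
    · subst hm
      have := hrow ⟨0, hn⟩
      simp at this
      exact absurd this.symm (ne_of_gt (hr ⟨0, hn⟩))
  rcases Nat.eq_zero_or_pos n with hn | hn
  · subst hn
    have := hcol ⟨0, hm⟩
    simp at this
    exact absurd this.symm (ne_of_gt (hc ⟨0, hm⟩))
  -- maximizer of the ratio u'/u
  obtain ⟨i0, -, hmax⟩ := Finset.exists_max_image Finset.univ (fun i => u' i / u i)
    ⟨⟨0, hn⟩, Finset.mem_univ _⟩
  set d : ℝ := u' i0 / u i0 with hd
  have hd0 : 0 < d := div_pos (hu' i0) (hu i0)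
  have hub : ∀ i, u' i ≤ d * u i := by
    intro i
    have h := hmax i (Finset.mem_univ i)
    have hui := (hu i).ne'
    calc u' i = (u' i / u i) * u i := by field_simp
    _ ≤ d * u i := mul_le_mul_of_nonneg_right h (hu i).le
  have hui0 : u' i0 = d * u i0 := by
    rw [hd, div_mul_cancel₀ _ (hu i0).ne']
  -- Step 1: v j ≤ d * v' j for all j
  have hvb : ∀ j, v j ≤ d * v' j := by
    intro j
    have h1 : c j ≤ d * (v' j / v j) * c j := by
      conv_lhs => rw [← hcol' j]
      have key : ∀ i, u' i * M i j * v' j ≤ d * (v' j / v j) * (u i * M i j * v j) := by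
        intro i
        have hvj := (hv j).ne'
        have heq : d * (v' j / v j) * (u i * M i j * v j) = (d * u i) * M i j * v' j := by
          field_simp
        rw [heq]
        exact mul_le_mul_of_nonneg_right
          (mul_le_mul_of_nonneg_right (hub i) (hM i j).le) (hv' j).le
      calc ∑ i, u' i * M i j * v' j
          ≤ ∑ i, d * (v' j / v j) * (u i * M i j * v j) :=
            Finset.sum_le_sum fun i _ => key i
        _ = d * (v' j / v j) * c j := by rw [← Finset.mul_sum, hcol j]
    have h2 : 1 ≤ d * (v' j / v j) := by
      by_contra h
      push_neg at h
      nlinarith [hc j]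
    have hvj := (hv j).ne'
    calc v j = 1 * v j := (one_mul _).symm
    _ ≤ (d * (v' j / v j)) * v j := mul_le_mul_of_nonneg_right h2 (hv j).le
    _ = d * v' j := by field_simp
  -- Step 2: equality in row i0 forces v' j = (1/d) * v j
  have hveq : ∀ j, v' j = (1 / d) * v j := by
    have hle : ∀ j, u i0 * M i0 j * v j ≤ d * u i0 * M i0 j * v' j := by
      intro j
      have : u i0 * M i0 j * v j ≤ u i0 * M i0 j * (d * v' j) :=
        mul_le_mul_of_nonneg_left (hvb j) (mul_pos (hu i0) (hM i0 j)).le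
      linarith [this, (by ring : u i0 * M i0 j * (d * v' j) = d * u i0 * M i0 j * v' j)]
    have hsums : ∑ j, u i0 * M i0 j * v j = ∑ j, d * u i0 * M i0 j * v' j := by
      rw [hrow i0, ← hrow' i0]
      exact Finset.sum_congr rfl fun j _ => by rw [hui0]
    have heach := eq_of_sum_eq_of_le hle hsums
    intro j
    have h := heach j
    have hA : (0:ℝ) < u i0 * M i0 j := mul_pos (hu i0) (hM i0 j)
    have h' : (u i0 * M i0 j) * v j = (u i0 * M i0 j) * (d * v' j) := by
      linear_combination h
    have hveq : v j = d * v' j := mul_left_cancel₀ hA.ne' h'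
    rw [hveq]
    field_simp
  -- Step 3: columns force u' i = d * u i
  have hueq : ∀ i, u' i = d * u i := by
    have key : ∀ j, ∀ i, u' i * M i j * v' j = u' i / d * M i j * v j := by
      intro j i
      rw [hveq j]
      field_simp
    intro i
    -- fix an arbitrary column j0
    set j0 : Fin m := ⟨0, hm⟩
    have hle : ∀ i, u' i / d * M i j0 * v j0 ≤ u i * M i j0 * v j0 := by
      intro i
      have : u' i / d ≤ u i := by
        rw [div_le_iff₀ hd0]
        linarith [hub i]
      exact mul_le_mul_of_nonneg_right
        (mul_le_mul_of_nonneg_right this (hM i j0).le) (hv j0).le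
    have hsums : ∑ i, u' i / d * M i j0 * v j0 = ∑ i, u i * M i j0 * v j0 := by
      rw [hcol j0, ← hcol' j0]
      exact Finset.sum_congr rfl fun i _ => (key j0 i).symm
    have heach := eq_of_sum_eq_of_le hle hsums
    have h := heach i
    have hA : (0:ℝ) < M i j0 * v j0 := mul_pos (hM i j0) (hv j0)
    have h' : (u' i / d) * (M i j0 * v j0) = u i * (M i j0 * v j0) := by
      linear_combination h
    have hueq : u' i / d = u i := mul_right_cancel₀ hA.ne' h'
    rw [← hueq]
    field_simp
  refine ⟨⟨d, hd0, hueq, hveq⟩, fun i j => ?_⟩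
  rw [hueq i, hveq j]
  field_simp
end

section
/- (Proposition 4, robustness/continuity.) For an n×m nonnegative matrix M and probability vectors r ∈ ℝ^n, c ∈ ℝ^m with strictly positive entries, let Φ(M,r,c) denote the minimizer of D_KL(P‖M) over P ∈ U(r,c) when it exists and is unique. Then Φ is continuous at every point where it is defined: if (M_k, r_k, c_k) → (M, r, c) with each Φ(M_k, r_k, c_k) and Φ(M,r,c) defined, then Φ(M_k, r_k, c_k) → Φ(M, r, c). In particular, Φ restricted to strictly positive M and strictly positive probability vectors r, c is a continuous map. -/
open Classical in
/-- Relative entropy `D_KL(P‖M) = Σ_{ij} P_ij log(P_ij/M_ij)`, with conventions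
`0 log 0 = 0` and `D_KL(P‖M) = +∞` if some `P_ij > 0` while `M_ij = 0`. -/
noncomputable def klDiv {n m : ℕ} (P M : Matrix (Fin n) (Fin m) ℝ) : EReal :=
  if ∀ i j, M i j = 0 → P i j = 0 then
    ((∑ i, ∑ j, P i j * Real.log (P i j / M i j) : ℝ) : EReal)
  else ⊤

/-- `P` is the value `Φ(M,r,c)`: the unique minimizer of `D_KL(·‖M)` over `U(r,c)`. -/
def IsPhi {n m : ℕ} (M : Matrix (Fin n) (Fin m) ℝ) (r : Fin n → ℝ) (c : Fin m → ℝ)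
    (P : Matrix (Fin n) (Fin m) ℝ) : Prop :=
  P ∈ transportPolytope r c ∧
  (∀ Q ∈ transportPolytope r c, klDiv P M ≤ klDiv Q M) ∧
  (∀ P' : Matrix (Fin n) (Fin m) ℝ,
    (P' ∈ transportPolytope r c ∧ ∀ Q ∈ transportPolytope r c, klDiv P' M ≤ klDiv Q M) →
    P' = P)

/-!
By compactness it suffices to show that every subsequential limit `Q` of
`P_k = Φ(M_k, r_k, c_k)` equals `P = Φ(M, r, c)`. For `t ∈ (0, 1)` the matrix
`P_k + t (P - Q)` lies in `U(r_k, c_k)` for large `k`, so it cannot beat `P_k`; letting `k → ∞`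
shows that `Q` vanishes where `M` does and `KL(Q‖M) ≤ KL(Q + t (P - Q)‖M)`. Letting `t → 1`
makes `Q` a minimizer, hence `Q = P` by uniqueness. Minimizers have finite divergence because
`U(r, c)` has more than one point when `n, m ≥ 2`; if `n ≤ 1` or `m ≤ 1` the marginals determine
the unique point of `U(r, c)`.
-/

open Filter Finset Real Topology

section Scalar

variable {α : Type*} {l : Filter α}

lemma mul_log_div_of_ne_zero (x : ℝ) {z : ℝ} (hz : z ≠ 0) :
    x * log (x / z) = x * log x - x * log z := by
  rcases eq_or_ne x 0 with rfl | hx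
  · simp
  · rw [log_div hx hz, mul_sub]

-- Continuity in `x` holds also for `z = 0`, where `log (x / 0) = log 0 = 0`.
lemma continuous_mul_log_div (z : ℝ) : Continuous fun x : ℝ => x * log (x / z) := by
  rcases eq_or_ne z 0 with rfl | hz
  · simpa using continuous_const
  · have h : (fun x : ℝ => x * log (x / z)) = fun x => z * (x / z * log (x / z)) := by
      ext x; field_simp
    rw [h]
    exact continuous_const.mul (continuous_mul_log.comp (continuous_id.div_const z))

lemma Filter.Tendsto.mul_log_div {x z : α → ℝ} {a b : ℝ} (hx : Tendsto x l (𝓝 a))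
    (hz : Tendsto z l (𝓝 b)) (hb : b ≠ 0) :
    Tendsto (fun k => x k * Real.log (x k / z k)) l (𝓝 (a * Real.log (a / b))) := by
  have h := hz.mul ((continuous_mul_log.tendsto (a / b)).comp (hx.div hz hb))
  rw [show b * (a / b * Real.log (a / b)) = a * Real.log (a / b) by field_simp] at h
  refine h.congr' ?_
  filter_upwards [hz.eventually_ne hb] with k hk
  simp only [Function.comp_apply, Pi.div_apply]
  field_simp

lemma tendsto_mul_log_div_sub_mul_log_div_atBot {x y z : α → ℝ} {a b δ : ℝ}
    (hx : Tendsto x l (𝓝 a)) (hy : Tendsto y l (𝓝 b)) (hz : Tendsto z l (𝓝[≠] 0))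
    (hδ : 0 < δ) (hxy : ∀ k, y k - x k = δ) :
    Tendsto (fun k => x k * log (x k / z k) - y k * log (y k / z k)) l atBot := by
  have hent : Tendsto (fun k => x k * log (x k) - y k * log (y k)) l
      (𝓝 (a * log a - b * log b)) :=
    ((continuous_mul_log.tendsto a).comp hx).sub ((continuous_mul_log.tendsto b).comp hy)
  have hlog : Tendsto (fun k => δ * log (z k)) l atBot :=
    (tendsto_log_nhdsNE_zero.comp hz).const_mul_atBot hδ
  refine (hent.add_atBot hlog).congr' ?_
  filter_upwards [hz self_mem_nhdsWithin] with k hk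
  rw [mul_log_div_of_ne_zero _ hk, mul_log_div_of_ne_zero _ hk, ← hxy k]
  ring

end Scalar

lemma tendsto_sum_atBot_of_isBoundedUnder {ι α : Type*} [Fintype ι] [DecidableEq ι]
    {l : Filter α} {f : ι → α → ℝ} (hf : ∀ i, IsBoundedUnder (· ≤ ·) l (f i)) {i₀ : ι}
    (h₀ : Tendsto (f i₀) l atBot) : Tendsto (fun a => ∑ i, f i a) l atBot := by
  obtain ⟨C, hC⟩ := isBoundedUnder_le_sum (univ.erase i₀) fun i _ => hf i
  simp_rw [← add_sum_erase univ _ (mem_univ i₀)]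
  exact tendsto_atBot_add_right_of_ge' l C h₀ (by simpa using hC)

lemma Filter.Tendsto.matrix_elem {α ι κ R : Type*} [TopologicalSpace R] {l : Filter α}
    {A : α → Matrix ι κ R} {B : Matrix ι κ R} (h : Tendsto A l (𝓝 B)) (i : ι) (j : κ) :
    Tendsto (fun k => A k i j) l (𝓝 (B i j)) :=
  ((continuous_id.matrix_elem i j).tendsto B).comp h

namespace TransportPolytope

variable {n m : ℕ} {r : Fin n → ℝ} {c : Fin m → ℝ} {P : Matrix (Fin n) (Fin m) ℝ}

lemma add_mem (hP : P ∈ transportPolytope r c) {E : Matrix (Fin n) (Fin m) ℝ}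
    (hrow : ∀ i, ∑ j, E i j = 0) (hcol : ∀ j, ∑ i, E i j = 0)
    (hnonneg : ∀ i j, 0 ≤ P i j + E i j) : P + E ∈ transportPolytope r c :=
  ⟨hnonneg, fun i => by simp [sum_add_distrib, hP.2.1 i, hrow i],
    fun j => by simp [sum_add_distrib, hP.2.2 j, hcol j]⟩

lemma smul_sub_rowSum_eq_zero {Q : Matrix (Fin n) (Fin m) ℝ} (hP : P ∈ transportPolytope r c)
    (hQ : Q ∈ transportPolytope r c) (t : ℝ) (i : Fin n) : ∑ j, (t • (P - Q)) i j = 0 := by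
  simp [← mul_sum, sum_sub_distrib, hP.2.1 i, hQ.2.1 i]

lemma smul_sub_colSum_eq_zero {Q : Matrix (Fin n) (Fin m) ℝ} (hP : P ∈ transportPolytope r c)
    (hQ : Q ∈ transportPolytope r c) (t : ℝ) (j : Fin m) : ∑ i, (t • (P - Q)) i j = 0 := by
  simp [← mul_sum, sum_sub_distrib, hP.2.2 j, hQ.2.2 j]

lemma vecMulVec_mem (hr : ∀ i, 0 ≤ r i) (hc : ∀ j, 0 ≤ c j) (hr1 : ∑ i, r i = 1)
    (hc1 : ∑ j, c j = 1) : Matrix.vecMulVec r c ∈ transportPolytope r c :=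
  ⟨fun i j => mul_nonneg (hr i) (hc j), fun i => by simp [Matrix.vecMulVec_apply, ← mul_sum, hc1],
    fun j => by simp [Matrix.vecMulVec_apply, ← sum_mul, hr1]⟩

-- `r ⊗ c` is an interior point, so it can be moved along the direction `(e₀ - e₁) ⊗ (e₀ - e₁)`.
lemma nontrivial (hn : 2 ≤ n) (hm : 2 ≤ m) (hr : ∀ i, 0 < r i) (hc : ∀ j, 0 < c j)
    (hr1 : ∑ i, r i = 1) (hc1 : ∑ j, c j = 1) : (transportPolytope r c).Nontrivial := by
  let i₀ : Fin n := ⟨0, by omega⟩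
  let i₁ : Fin n := ⟨1, by omega⟩
  let j₀ : Fin m := ⟨0, by omega⟩
  let j₁ : Fin m := ⟨1, by omega⟩
  let E : Matrix (Fin n) (Fin m) ℝ :=
    Matrix.vecMulVec (Pi.single i₀ 1 - Pi.single i₁ 1) (Pi.single j₀ 1 - Pi.single j₁ 1)
  have hpos : ∀ᶠ t in 𝓝[≠] (0 : ℝ), ∀ i j, 0 < r i * c j + t * E i j := by
    refine eventually_all.2 fun i => eventually_all.2 fun j => ?_
    have h : Tendsto (fun t : ℝ => r i * c j + t * E i j) (𝓝[≠] 0) (𝓝 (r i * c j)) :=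
      ((by fun_prop : Continuous fun t : ℝ => r i * c j + t * E i j).tendsto' 0 _
        (by simp)).mono_left nhdsWithin_le_nhds
    exact h.eventually (eventually_gt_nhds (mul_pos (hr i) (hc j)))
  obtain ⟨t, hpos, ht⟩ := (hpos.and self_mem_nhdsWithin).exists
  have hA := vecMulVec_mem (fun i => (hr i).le) (fun j => (hc j).le) hr1 hc1
  refine ⟨_, hA, _, add_mem hA (E := t • E) (fun i => ?_) (fun j => ?_) fun i j => (hpos i j).le,
    fun h => ht ?_⟩
  · simp [E, Matrix.vecMulVec_apply, ← mul_sum, sum_sub_distrib]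
  · simp [E, Matrix.vecMulVec_apply, ← mul_sum, ← sum_mul, sum_sub_distrib]
  · have h00 := congrFun (congrFun h i₀) j₀
    simpa [E, Matrix.vecMulVec_apply, i₀, i₁, j₀, j₁, Pi.single_apply] using h00.symm

lemma eq_of_le_one_rows (hn : n ≤ 1) (hP : P ∈ transportPolytope r c) : P = fun _ j => c j := by
  have : Subsingleton (Fin n) := Fin.subsingleton_iff_le_one.2 hn
  ext i j
  simpa [Fintype.sum_subsingleton _ i] using hP.2.2 j

lemma eq_of_le_one_cols (hm : m ≤ 1) (hP : P ∈ transportPolytope r c) : P = fun i _ => r i := by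
  have : Subsingleton (Fin m) := Fin.subsingleton_iff_le_one.2 hm
  ext i j
  simpa [Fintype.sum_subsingleton _ j] using hP.2.1 i

lemma subset_pi_Icc (hr1 : ∑ i, r i = 1) :
    transportPolytope r c ⊆ Set.univ.pi fun _ => Set.univ.pi fun _ => Set.Icc 0 1 := by
  intro P hP i _ j _
  refine ⟨hP.1 i j, ?_⟩
  calc P i j ≤ ∑ j, P i j := single_le_sum (fun j _ => hP.1 i j) (mem_univ j)
    _ ≤ ∑ i, ∑ j, P i j := single_le_sum (fun i _ => sum_nonneg fun j _ => hP.1 i j) (mem_univ i)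
    _ = 1 := by simp [hP.2.1, hr1]

lemma mem_of_tendsto {α : Type*} {l : Filter α} [l.NeBot] {Pk : α → Matrix (Fin n) (Fin m) ℝ}
    {rk : α → Fin n → ℝ} {ck : α → Fin m → ℝ} (hmem : ∀ k, Pk k ∈ transportPolytope (rk k) (ck k))
    (hP : Tendsto Pk l (𝓝 P)) (hr : Tendsto rk l (𝓝 r)) (hc : Tendsto ck l (𝓝 c)) :
    P ∈ transportPolytope r c :=
  ⟨fun i j => ge_of_tendsto' (hP.matrix_elem i j) fun k => (hmem k).1 i j,
    fun i => tendsto_nhds_unique (tendsto_finsetSum _ fun j _ => hP.matrix_elem i j)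
      ((tendsto_pi_nhds.1 hr i).congr fun k => ((hmem k).2.1 i).symm),
    fun j => tendsto_nhds_unique (tendsto_finsetSum _ fun i _ => hP.matrix_elem i j)
      ((tendsto_pi_nhds.1 hc j).congr fun k => ((hmem k).2.2 j).symm)⟩

end TransportPolytope

section KL

variable {n m : ℕ}

noncomputable def klSum (P M : Matrix (Fin n) (Fin m) ℝ) : ℝ :=
  ∑ p : Fin n × Fin m, P p.1 p.2 * log (P p.1 p.2 / M p.1 p.2)

lemma klDiv_eq_klSum {P M : Matrix (Fin n) (Fin m) ℝ} (h : ∀ i j, M i j = 0 → P i j = 0) :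
    klDiv P M = klSum P M := by
  rw [klDiv, if_pos h, klSum, Fintype.sum_prod_type]

lemma continuous_klSum_left (M : Matrix (Fin n) (Fin m) ℝ) :
    Continuous fun P : Matrix (Fin n) (Fin m) ℝ => klSum P M :=
  continuous_finsetSum _ fun p _ =>
    (continuous_mul_log_div (M p.1 p.2)).comp (continuous_id.matrix_elem p.1 p.2)

end KL

namespace IsPhi

variable {n m : ℕ} {M P : Matrix (Fin n) (Fin m) ℝ} {r : Fin n → ℝ} {c : Fin m → ℝ}

lemma eq_of_mem_of_klDiv_le (h : IsPhi M r c P) {Q : Matrix (Fin n) (Fin m) ℝ}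
    (hQ : Q ∈ transportPolytope r c) (hle : klDiv Q M ≤ klDiv P M) : Q = P :=
  h.2.2 Q ⟨hQ, fun X hX => hle.trans (h.2.1 X hX)⟩

-- If the minimum were `⊤`, every point of `U(r,c)` would be a minimizer.
lemma klDiv_ne_top (h : IsPhi M r c P) (hU : (transportPolytope r c).Nontrivial) :
    klDiv P M ≠ ⊤ := by
  intro htop
  obtain ⟨Q, hQ, hQP⟩ := hU.exists_ne P
  exact hQP (h.eq_of_mem_of_klDiv_le hQ (htop ▸ le_top))

lemma absCont (h : IsPhi M r c P) (hU : (transportPolytope r c).Nontrivial) :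
    ∀ i j, M i j = 0 → P i j = 0 := by
  by_contra hsupp
  exact h.klDiv_ne_top hU (by rw [klDiv, if_neg hsupp])

lemma klSum_le (h : IsPhi M r c P) (hU : (transportPolytope r c).Nontrivial)
    {X : Matrix (Fin n) (Fin m) ℝ} (hX : X ∈ transportPolytope r c)
    (hXM : ∀ i j, M i j = 0 → X i j = 0) : klSum P M ≤ klSum X M := by
  have hle := h.2.1 X hX
  rwa [klDiv_eq_klSum (h.absCont hU), klDiv_eq_klSum hXM, EReal.coe_le_coe_iff] at hle

end IsPhi

section Limit

variable {n m : ℕ} {Mk Pk : ℕ → Matrix (Fin n) (Fin m) ℝ} {M P Q : Matrix (Fin n) (Fin m) ℝ}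
  {t : ℝ}

lemma eventually_apply_ne_zero_of_tendsto (hMk : Tendsto Mk atTop (𝓝 M)) :
    ∀ᶠ k in atTop, ∀ i j, M i j ≠ 0 → Mk k i j ≠ 0 := by
  refine eventually_all.2 fun i => eventually_all.2 fun j => ?_
  by_cases h : M i j = 0
  · exact .of_forall fun _ h' => absurd h h'
  · exact ((hMk.matrix_elem i j).eventually_ne h).mono fun _ hk _ => hk

lemma eventually_add_smul_sub_mem {rk : ℕ → Fin n → ℝ} {ck : ℕ → Fin m → ℝ} {r : Fin n → ℝ}
    {c : Fin m → ℝ} (hmem : ∀ k, Pk k ∈ transportPolytope (rk k) (ck k))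
    (hPkM : ∀ k i j, Mk k i j = 0 → Pk k i j = 0) (hMk : Tendsto Mk atTop (𝓝 M))
    (hPk : Tendsto Pk atTop (𝓝 Q)) (hP : P ∈ transportPolytope r c)
    (hQ : Q ∈ transportPolytope r c) (hPM : ∀ i j, M i j = 0 → P i j = 0) (ht : t ∈ Set.Ioo 0 1) :
    ∀ᶠ k in atTop, Pk k + t • (P - Q) ∈ transportPolytope (rk k) (ck k) ∧
      ∀ i j, Mk k i j = 0 → (Pk k + t • (P - Q)) i j = 0 := by
  have hnonneg : ∀ᶠ k in atTop, ∀ i j, 0 ≤ Pk k i j + t * (P i j - Q i j) := by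
    refine eventually_all.2 fun i => eventually_all.2 fun j => ?_
    have hPnn := hP.1 i j
    have hQnn := hQ.1 i j
    rcases (show 0 ≤ Q i j + t * (P i j - Q i j) by nlinarith [ht.1, ht.2]).lt_or_eq
      with hpos | hzero
    · exact (((hPk.matrix_elem i j).add_const _).eventually (eventually_gt_nhds hpos)).mono
        fun k hk => hk.le
    · have hQ0 : Q i j = 0 := by nlinarith [ht.1, ht.2]
      have hP0 : P i j = 0 := by nlinarith [ht.1, ht.2]
      exact .of_forall fun k => by simp [hP0, hQ0, (hmem k).1 i j]
  filter_upwards [hnonneg, eventually_apply_ne_zero_of_tendsto hMk] with k hnonneg hne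
  refine ⟨TransportPolytope.add_mem (hmem k) (TransportPolytope.smul_sub_rowSum_eq_zero hP hQ t)
    (TransportPolytope.smul_sub_colSum_eq_zero hP hQ t) (by simpa using hnonneg),
    fun i j hMk0 => ?_⟩
  have hM0 : M i j = 0 := by_contra fun h => hne i j h hMk0
  have hle := hnonneg i j
  simp only [Matrix.add_apply, Matrix.smul_apply, Matrix.sub_apply, smul_eq_mul,
    hPkM k i j hMk0, hPM i j hM0] at hle ⊢
  nlinarith [mul_nonneg ht.1.le (hQ.1 i j)]

-- Compare `P_k` with the competitor `P_k + t (P - Q)`: on entries with `M = 0 < Q` the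
-- difference of the objectives contains `t Q log M_k → -∞`.
lemma klSum_le_of_tendsto (hMk : Tendsto Mk atTop (𝓝 M)) (hPk : Tendsto Pk atTop (𝓝 Q))
    (hPkM : ∀ k i j, Mk k i j = 0 → Pk k i j = 0) (hPM : ∀ i j, M i j = 0 → P i j = 0)
    (hQ : ∀ i j, 0 ≤ Q i j) (ht : 0 < t)
    (hle : ∀ᶠ k in atTop, klSum (Pk k) (Mk k) ≤ klSum (Pk k + t • (P - Q)) (Mk k)) :
    (∀ i j, M i j = 0 → Q i j = 0) ∧ klSum Q M ≤ klSum (Q + t • (P - Q)) M := by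
  set Rk := fun k => Pk k + t • (P - Q)
  set R := Q + t • (P - Q)
  have hRk : Tendsto Rk atTop (𝓝 R) := hPk.add_const _
  let g : Fin n × Fin m → ℕ → ℝ := fun p k =>
    Rk k p.1 p.2 * log (Rk k p.1 p.2 / Mk k p.1 p.2) -
      Pk k p.1 p.2 * log (Pk k p.1 p.2 / Mk k p.1 p.2)
  have hsum : ∀ᶠ k in atTop, 0 ≤ ∑ p, g p k := by
    filter_upwards [hle] with k hk
    rw [sum_sub_distrib, sub_nonneg]
    exact hk
  have hlim : ∀ p : Fin n × Fin m, M p.1 p.2 ≠ 0 ∨ Q p.1 p.2 = 0 →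
      Tendsto (g p) atTop (𝓝 (R p.1 p.2 * log (R p.1 p.2 / M p.1 p.2) -
        Q p.1 p.2 * log (Q p.1 p.2 / M p.1 p.2))) := by
    intro p hp
    by_cases hM0 : M p.1 p.2 = 0
    · simp [g, Rk, R, hM0, hp.resolve_left (not_not.2 hM0), hPM _ _ hM0]
    · exact ((hRk.matrix_elem _ _).mul_log_div (hMk.matrix_elem _ _) hM0).sub
        ((hPk.matrix_elem _ _).mul_log_div (hMk.matrix_elem _ _) hM0)
  have hbot : ∀ p : Fin n × Fin m, M p.1 p.2 = 0 → Q p.1 p.2 ≠ 0 →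
      Tendsto (g p) atTop atBot := by
    intro p hM0 hQ0
    refine tendsto_mul_log_div_sub_mul_log_div_atBot (hRk.matrix_elem _ _)
      (hPk.matrix_elem _ _) ?_ (mul_pos ht ((hQ _ _).lt_of_ne' hQ0)) fun k => ?_
    · refine tendsto_nhdsWithin_iff.2 ⟨by simpa [hM0] using hMk.matrix_elem p.1 p.2, ?_⟩
      filter_upwards [(hPk.matrix_elem p.1 p.2).eventually_ne hQ0] with k hk
      exact mt (hPkM k _ _) hk
    · simp [Rk, hPM _ _ hM0]
  have hQM : ∀ i j, M i j = 0 → Q i j = 0 := by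
    by_contra! h
    obtain ⟨i, j, hM0, hQ0⟩ := h
    have hbdd : ∀ p, IsBoundedUnder (· ≤ ·) atTop (g p) := fun p =>
      if hp : M p.1 p.2 ≠ 0 ∨ Q p.1 p.2 = 0 then (hlim p hp).isBoundedUnder_le
      else (hbot p (not_not.1 (not_or.1 hp).1) (not_or.1 hp).2).isBoundedUnder_le_atBot
    obtain ⟨k, hneg, hk⟩ := (((tendsto_sum_atBot_of_isBoundedUnder hbdd
      (hbot (i, j) hM0 hQ0)).eventually (eventually_lt_atBot 0)).and hsum).exists
    linarith
  refine ⟨hQM, ?_⟩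
  have hlim_sum := tendsto_finsetSum univ fun p _ =>
    hlim p ((ne_or_eq (M p.1 p.2) 0).imp_right (hQM _ _))
  simpa [klSum, sum_sub_distrib] using ge_of_tendsto hlim_sum hsum

end Limit

lemma IsPhi.eq_of_tendsto {n m : ℕ} {Mk Pk : ℕ → Matrix (Fin n) (Fin m) ℝ}
    {rk : ℕ → Fin n → ℝ} {ck : ℕ → Fin m → ℝ} {M P Q : Matrix (Fin n) (Fin m) ℝ}
    {r : Fin n → ℝ} {c : Fin m → ℝ} (hPhik : ∀ k, IsPhi (Mk k) (rk k) (ck k) (Pk k))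
    (hUk : ∀ k, (transportPolytope (rk k) (ck k)).Nontrivial) (hPhi : IsPhi M r c P)
    (hU : (transportPolytope r c).Nontrivial) (hMk : Tendsto Mk atTop (𝓝 M))
    (hrk : Tendsto rk atTop (𝓝 r)) (hck : Tendsto ck atTop (𝓝 c))
    (hPk : Tendsto Pk atTop (𝓝 Q)) : Q = P := by
  have hQ : Q ∈ transportPolytope r c :=
    TransportPolytope.mem_of_tendsto (fun k => (hPhik k).1) hPk hrk hck
  have hPM := hPhi.absCont hU
  have hPkM := fun k => (hPhik k).absCont (hUk k)
  have hmix : ∀ t ∈ Set.Ioo (0 : ℝ) 1,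
      (∀ i j, M i j = 0 → Q i j = 0) ∧ klSum Q M ≤ klSum (Q + t • (P - Q)) M := fun t ht =>
    klSum_le_of_tendsto hMk hPk hPkM hPM hQ.1 ht.1 <| by
      filter_upwards [eventually_add_smul_sub_mem (fun k => (hPhik k).1) hPkM hMk hPk hPhi.1 hQ
        hPM ht] with k hk
      exact (hPhik k).klSum_le (hUk k) hk.1 hk.2
  have hQM := (hmix (1 / 2) ⟨by norm_num, by norm_num⟩).1
  have hle : klSum Q M ≤ klSum P M := by
    have hcont : Tendsto (fun t : ℝ => klSum (Q + t • (P - Q)) M) (𝓝[<] 1) (𝓝 (klSum P M)) := by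
      have h := ((continuous_klSum_left M).comp
        (by fun_prop : Continuous fun t : ℝ => Q + t • (P - Q))).tendsto 1
      simpa [Function.comp_def] using h.mono_left nhdsWithin_le_nhds
    exact ge_of_tendsto hcont (eventually_of_mem (Ioo_mem_nhdsLT one_pos) fun t ht => (hmix t ht).2)
  exact hPhi.eq_of_mem_of_klDiv_le hQ
    (by rw [klDiv_eq_klSum hQM, klDiv_eq_klSum hPM]; exact_mod_cast hle)

theorem phi_continuous_general {n m : ℕ}
    (Mk : ℕ → Matrix (Fin n) (Fin m) ℝ) (rk : ℕ → Fin n → ℝ) (ck : ℕ → Fin m → ℝ)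
    (M : Matrix (Fin n) (Fin m) ℝ) (r : Fin n → ℝ) (c : Fin m → ℝ)
    (Pk : ℕ → Matrix (Fin n) (Fin m) ℝ) (P : Matrix (Fin n) (Fin m) ℝ)
    (hrk : ∀ k, (∀ i, 0 < rk k i) ∧ ∑ i, rk k i = 1)
    (hck : ∀ k, (∀ j, 0 < ck k j) ∧ ∑ j, ck k j = 1)
    (hr : (∀ i, 0 < r i) ∧ ∑ i, r i = 1)
    (hc : (∀ j, 0 < c j) ∧ ∑ j, c j = 1)
    (hMconv : Filter.Tendsto Mk Filter.atTop (nhds M))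
    (hrconv : Filter.Tendsto rk Filter.atTop (nhds r))
    (hcconv : Filter.Tendsto ck Filter.atTop (nhds c))
    (hPhik : ∀ k, IsPhi (Mk k) (rk k) (ck k) (Pk k))
    (hPhi : IsPhi M r c P) :
    Filter.Tendsto Pk Filter.atTop (nhds P) := by
  rcases le_or_gt n 1 with hn | hn
  · rw [funext fun k => TransportPolytope.eq_of_le_one_rows hn (hPhik k).1,
      TransportPolytope.eq_of_le_one_rows hn hPhi.1]
    exact tendsto_pi_nhds.2 fun _ => hcconv
  rcases le_or_gt m 1 with hm | hm
  · rw [funext fun k => TransportPolytope.eq_of_le_one_cols hm (hPhik k).1,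
      TransportPolytope.eq_of_le_one_cols hm hPhi.1]
    exact tendsto_pi_nhds.2 fun i => tendsto_pi_nhds.2 fun _ => tendsto_pi_nhds.1 hrconv i
  have hU {r : Fin n → ℝ} {c : Fin m → ℝ} (hr : (∀ i, 0 < r i) ∧ ∑ i, r i = 1)
      (hc : (∀ j, 0 < c j) ∧ ∑ j, c j = 1) : (transportPolytope r c).Nontrivial :=
    TransportPolytope.nontrivial hn hm hr.1 hc.1 hr.2 hc.2
  have : FirstCountableTopology (Matrix (Fin n) (Fin m) ℝ) :=
    inferInstanceAs (FirstCountableTopology (Fin n → Fin m → ℝ))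
  refine (isCompact_univ_pi fun _ => isCompact_univ_pi fun _ => isCompact_Icc)
    |>.tendsto_nhds_of_unique_mapClusterPt
      (.of_forall fun k => TransportPolytope.subset_pi_Icc (hrk k).2 (hPhik k).1)
      fun Q _ hQ => ?_
  obtain ⟨φ, hφ, hPφ⟩ := hQ.tendsto_subseq
  have hφ := hφ.tendsto_atTop
  exact IsPhi.eq_of_tendsto (fun k => hPhik (φ k)) (fun k => hU (hrk (φ k)) (hck (φ k))) hPhi
    (hU hr hc) (hMconv.comp hφ) (hrconv.comp hφ) (hcconv.comp hφ) hPφ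

/-- Robustness/continuity of `Φ`: if `(M_k, r_k, c_k) → (M, r, c)` within the domain of
definition (nonnegative matrices, strictly positive probability marginals), with
`Φ(M_k, r_k, c_k)` and `Φ(M, r, c)` defined, then `Φ(M_k, r_k, c_k) → Φ(M, r, c)`. -/
theorem phi_continuous {n m : ℕ}
    (Mk : ℕ → Matrix (Fin n) (Fin m) ℝ) (rk : ℕ → Fin n → ℝ) (ck : ℕ → Fin m → ℝ)
    (M : Matrix (Fin n) (Fin m) ℝ) (r : Fin n → ℝ) (c : Fin m → ℝ)
    (Pk : ℕ → Matrix (Fin n) (Fin m) ℝ) (P : Matrix (Fin n) (Fin m) ℝ)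
    (hMk : ∀ k, ∀ i j, 0 ≤ Mk k i j)
    (hrk : ∀ k, (∀ i, 0 < rk k i) ∧ ∑ i, rk k i = 1)
    (hck : ∀ k, (∀ j, 0 < ck k j) ∧ ∑ j, ck k j = 1)
    (hM : ∀ i j, 0 ≤ M i j)
    (hr : (∀ i, 0 < r i) ∧ ∑ i, r i = 1)
    (hc : (∀ j, 0 < c j) ∧ ∑ j, c j = 1)
    (hMconv : Filter.Tendsto Mk Filter.atTop (nhds M))
    (hrconv : Filter.Tendsto rk Filter.atTop (nhds r))
    (hcconv : Filter.Tendsto ck Filter.atTop (nhds c))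
    (hPhik : ∀ k, IsPhi (Mk k) (rk k) (ck k) (Pk k))
    (hPhi : IsPhi M r c P) :
    Filter.Tendsto Pk Filter.atTop (nhds P) :=
  phi_continuous_general Mk rk ck M r c Pk P hrk hck hr hc hMconv hrconv hcconv hPhik hPhi
end

section
/- (Proposition 5, concentration on leading diagonals.) Let M be an n×n nonnegative matrix with at least one positive diagonal, and for λ > 0 let M^[λ] be the entrywise power (M^[λ])_ij = (M_ij)^λ (with 0^λ = 0). Let u = (1/n, …, 1/n) and for each λ > 0 let M^(λ) be a minimizer of D_KL(P‖M^[λ]) over P ∈ U(u,u). Then for every entry position (s,t) that does not lie on any leading diagonal of M, M^(λ)_{st} → 0 as λ → ∞. -/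
/-- Diagonal product `d^A_σ = Π_i A_{i,σ(i)}`. -/
def diagProd {n : ℕ} (A : Matrix (Fin n) (Fin n) ℝ) (σ : Equiv.Perm (Fin n)) : ℝ :=
  ∏ i, A i (σ i)

private lemma xlogx_ge_aux (x : ℝ) (hx : 0 ≤ x) : (-1 : ℝ) ≤ x * Real.log x := by
  rcases hx.lt_or_eq with h|h
  · have h2 := Real.log_le_sub_one_of_pos (x := x⁻¹) (by positivity)
    rw [Real.log_inv] at h2
    nlinarith [mul_le_mul_of_nonneg_left h2 hx, mul_inv_cancel₀ h.ne']
  · rw [← h]; simp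

open Finset in
private lemma birkhoff_bound_aux {n : ℕ} (hn : 0 < n) (M : Matrix (Fin n) (Fin n) ℝ)
    (hM : ∀ i j, 0 ≤ M i j)
    (σmax : Equiv.Perm (Fin n))
    (hmax : ∀ τ, diagProd M τ ≤ diagProd M σmax)
    (s t : Fin n) (δ : ℝ)
    (hδ : ∀ σ : Equiv.Perm (Fin n), 0 < diagProd M σ → σ s = t →
      Real.log (diagProd M σ) ≤ Real.log (diagProd M σmax) - δ)
    (P : Matrix (Fin n) (Fin n) ℝ)
    (hP0 : ∀ i j, 0 ≤ P i j) (hPr : ∀ i, ∑ j, P i j = 1 / n)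
    (hPc : ∀ j, ∑ i, P i j = 1 / n)
    (hsupp : ∀ i j, M i j = 0 → P i j = 0) :
    ∑ i, ∑ j, P i j * Real.log (M i j) ≤ (1 / n) * Real.log (diagProd M σmax) - δ * P s t := by
  have hn' : (0:ℝ) < n := by exact_mod_cast hn
  have hDmem : ((n:ℝ) • P) ∈ doublyStochastic ℝ (Fin n) := by
    rw [mem_doublyStochastic_iff_sum]
    refine ⟨fun i j => by have := hP0 i j; simp only [Matrix.smul_apply, smul_eq_mul]; positivity,
      fun i => ?_, fun j => ?_⟩
    · simp only [Matrix.smul_apply, smul_eq_mul, ← Finset.mul_sum, hPr]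
      field_simp
    · simp only [Matrix.smul_apply, smul_eq_mul, ← Finset.mul_sum, hPc]
      field_simp
  obtain ⟨w, hw0, hw1, hwsum⟩ := exists_eq_sum_perm_of_mem_doublyStochastic hDmem
  have hPentry : ∀ i j, P i j = (1/n) * ∑ σ, w σ * (if σ i = j then (1:ℝ) else 0) := by
    intro i j
    have h := congrFun (congrFun hwsum i) j
    simp only [Matrix.sum_apply, Matrix.smul_apply, Equiv.Perm.permMatrix,
      PEquiv.toMatrix_apply, Equiv.toPEquiv_apply, Option.mem_def, Option.some.injEq,
      smul_eq_mul] at h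
    rw [h]
    field_simp
  have hposσ : ∀ σ, 0 < w σ → ∀ i, 0 < M i (σ i) := by
    intro σ hσ i
    have h1 : w σ ≤ ∑ τ, w τ * (if τ i = σ i then (1:ℝ) else 0) := by
      have := Finset.single_le_sum (f := fun τ : Equiv.Perm (Fin n) =>
        w τ * (if τ i = σ i then (1:ℝ) else 0))
        (fun τ _ => by have := hw0 τ; positivity) (mem_univ σ)
      simpa using this
    have hPpos : 0 < P i (σ i) := by
      rw [hPentry i (σ i)]
      exact mul_pos (by positivity) (lt_of_lt_of_le hσ h1)
    rcases (hM i (σ i)).lt_or_eq with h|h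
    · exact h
    · exact absurd (hsupp i (σ i) h.symm) hPpos.ne'
  have hdpos : ∀ σ, 0 < w σ → 0 < diagProd M σ := fun σ hσ =>
    Finset.prod_pos (fun i _ => hposσ σ hσ i)
  have hlog : ∀ σ, 0 < w σ → ∑ i, Real.log (M i (σ i)) = Real.log (diagProd M σ) := by
    intro σ hσ
    rw [diagProd, Real.log_prod]
    intro i _; exact (hposσ σ hσ i).ne'
  have hmain : ∑ i, ∑ j, P i j * Real.log (M i j)
      = (1/n) * ∑ σ, w σ * ∑ i, Real.log (M i (σ i)) := by
    have key : ∀ i, ∑ j, P i j * Real.log (M i j)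
        = (1/n) * ∑ σ, w σ * Real.log (M i (σ i)) := by
      intro i
      calc ∑ j, P i j * Real.log (M i j)
          = ∑ j, (1/n) * ∑ σ, (w σ * (if σ i = j then (1:ℝ) else 0)) * Real.log (M i j) := by
            refine Finset.sum_congr rfl fun j _ => ?_
            rw [hPentry i j, mul_assoc, Finset.sum_mul]
        _ = (1/n) * ∑ σ, ∑ j, (w σ * (if σ i = j then (1:ℝ) else 0)) * Real.log (M i j) := by
            rw [← Finset.mul_sum, Finset.sum_comm]
        _ = (1/n) * ∑ σ, w σ * Real.log (M i (σ i)) := by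
            congr 1
            refine Finset.sum_congr rfl fun σ _ => ?_
            simp [mul_assoc, ite_mul, ← Finset.mul_sum, Finset.sum_ite_eq]
    rw [Finset.sum_congr rfl (fun i _ => key i), ← Finset.mul_sum]
    congr 1
    rw [Finset.sum_comm]
    exact Finset.sum_congr rfl fun σ _ => (Finset.mul_sum _ _ _).symm
  have hPst : ∑ σ, w σ * (if σ s = t then (1:ℝ) else 0) = n * P s t := by
    rw [hPentry s t]; field_simp
  have hbound : ∑ σ, w σ * ∑ i, Real.log (M i (σ i))
      ≤ ∑ σ, w σ * (Real.log (diagProd M σmax) - δ * (if σ s = t then (1:ℝ) else 0)) := by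
    refine Finset.sum_le_sum fun σ _ => ?_
    rcases (hw0 σ).lt_or_eq with hσ|hσ
    · refine mul_le_mul_of_nonneg_left ?_ (hw0 σ)
      rw [hlog σ hσ]
      by_cases hs : σ s = t
      · simpa [hs] using hδ σ (hdpos σ hσ) hs
      · simpa [hs] using Real.log_le_log (hdpos σ hσ) (hmax σ)
    · simp [← hσ]
  have hrhs : ∑ σ, w σ * (Real.log (diagProd M σmax) - δ * (if σ s = t then (1:ℝ) else 0))
      = Real.log (diagProd M σmax) - δ * (n * P s t) := by
    simp only [mul_sub, Finset.sum_sub_distrib]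
    rw [← Finset.sum_mul, hw1, one_mul]
    congr 1
    rw [← hPst, Finset.mul_sum]
    exact Finset.sum_congr rfl fun σ _ => by ring
  rw [hmain]
  calc (1/n) * ∑ σ, w σ * ∑ i, Real.log (M i (σ i))
      ≤ (1/n) * (Real.log (diagProd M σmax) - δ * (n * P s t)) := by
        refine mul_le_mul_of_nonneg_left ?_ (by positivity)
        rw [← hrhs]; exact hbound
    _ = (1 / n) * Real.log (diagProd M σmax) - δ * P s t := by
        field_simp

/-- Proposition 5 (concentration on leading diagonals): let `M` be a nonnegative `n × n`
matrix with at least one positive diagonal, `M^[λ]` the entrywise power (using `rpow`,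
so `0^λ = 0` for `λ > 0`), and for each `λ > 0` let `Mlim λ` be a minimizer of
`D_KL(P‖M^[λ])` over `U(u,u)` with `u` uniform. If the position `(s,t)` lies on no
leading diagonal of `M`, then `Mlim λ s t → 0` as `λ → ∞`. -/
theorem concentration_on_leading_diagonals {n : ℕ}
    (M : Matrix (Fin n) (Fin n) ℝ) (hM : ∀ i j, 0 ≤ M i j)
    (hpos : ∃ σ : Equiv.Perm (Fin n), 0 < diagProd M σ)
    (Mlim : ℝ → Matrix (Fin n) (Fin n) ℝ)
    (hmin : ∀ lam : ℝ, 0 < lam →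
      Mlim lam ∈ transportPolytope (fun _ : Fin n => (1 : ℝ) / n) (fun _ : Fin n => (1 : ℝ) / n) ∧
      ∀ Q ∈ transportPolytope (fun _ : Fin n => (1 : ℝ) / n) (fun _ : Fin n => (1 : ℝ) / n),
        klDiv (Mlim lam) (fun i j => M i j ^ lam) ≤ klDiv Q (fun i j => M i j ^ lam))
    (s t : Fin n)
    (hst : ¬ ∃ σ : Equiv.Perm (Fin n),
      (∀ τ : Equiv.Perm (Fin n), diagProd M τ ≤ diagProd M σ) ∧ σ s = t) :
    Filter.Tendsto (fun lam => Mlim lam s t) Filter.atTop (nhds 0) := by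
  classical
  have hn : 0 < n := s.pos
  have hn' : (0:ℝ) < n := by exact_mod_cast hn
  obtain ⟨σ0, hσ0⟩ := hpos
  obtain ⟨σmax, -, hmax'⟩ := Finset.exists_max_image Finset.univ (diagProd M)
    ⟨σ0, Finset.mem_univ σ0⟩
  have hmax : ∀ τ, diagProd M τ ≤ diagProd M σmax := fun τ => hmax' τ (Finset.mem_univ τ)
  have hmaxpos : 0 < diagProd M σmax := lt_of_lt_of_le hσ0 (hmax σ0)
  have hMσ : ∀ i, 0 < M i (σmax i) := by
    intro i
    rcases (hM i (σmax i)).lt_or_eq with h|h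
    · exact h
    · exact absurd (Finset.prod_eq_zero (Finset.mem_univ i) h.symm : diagProd M σmax = 0)
        hmaxpos.ne'
  obtain ⟨δ, hδpos, hδ⟩ : ∃ δ > 0, ∀ σ : Equiv.Perm (Fin n), 0 < diagProd M σ → σ s = t →
      Real.log (diagProd M σ) ≤ Real.log (diagProd M σmax) - δ := by
    set S := Finset.univ.filter
      (fun σ : Equiv.Perm (Fin n) => σ s = t ∧ 0 < diagProd M σ) with hS
    rcases S.eq_empty_or_nonempty with hSe|hSne
    · exact ⟨1, one_pos, fun σ h1 h2 =>
        absurd (by simp [hS, h2, h1] : σ ∈ S) (by simp [hSe])⟩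
    · obtain ⟨σ', hσ'S, hσ'max⟩ := Finset.exists_max_image S (diagProd M) hSne
      have hσ's : σ' s = t ∧ 0 < diagProd M σ' := by simpa [hS] using hσ'S
      have hlt : diagProd M σ' < diagProd M σmax := by
        rcases (hmax σ').lt_or_eq with h|h
        · exact h
        · exact absurd ⟨σ', fun τ => h ▸ hmax τ, hσ's.1⟩ hst
      refine ⟨Real.log (diagProd M σmax) - Real.log (diagProd M σ'), by
        have := Real.log_lt_log hσ's.2 hlt; linarith, fun σ h1 h2 => ?_⟩
      have h3 : diagProd M σ ≤ diagProd M σ' := hσ'max σ (by simp [hS, h1, h2])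
      have := Real.log_le_log h1 h3
      linarith
  -- the comparison matrix Q
  set Q : Matrix (Fin n) (Fin n) ℝ := fun i j => if σmax i = j then 1/(n:ℝ) else 0 with hQ
  have hQmem : Q ∈ transportPolytope (fun _ : Fin n => (1 : ℝ) / n)
      (fun _ : Fin n => (1 : ℝ) / n) := by
    refine ⟨fun i j => by
      show (0:ℝ) ≤ if σmax i = j then 1/(n:ℝ) else 0
      positivity, fun i => ?_, fun j => ?_⟩
    · simp [hQ, Finset.sum_ite_eq]
    · simp [hQ, Equiv.apply_eq_iff_eq_symm_apply, Finset.sum_ite_eq']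
  have hlogd : ∑ i, Real.log (M i (σmax i)) = Real.log (diagProd M σmax) := by
    rw [diagProd, Real.log_prod]
    intro i _; exact (hMσ i).ne'
  have hQkl : ∀ lam : ℝ, 0 < lam → klDiv Q (fun i j => M i j ^ lam)
      = ((Real.log (1/n) - lam * ((1/n) * Real.log (diagProd M σmax)) : ℝ) : EReal) := by
    intro lam _
    unfold klDiv
    rw [if_pos]
    · have key : ∀ i, ∑ j, Q i j * Real.log (Q i j / (M i j ^ lam))
          = (1/n) * Real.log (1/n) - lam * ((1/n) * Real.log (M i (σmax i))) := by
        intro i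
        rw [Finset.sum_eq_single (σmax i)]
        · show (if σmax i = σmax i then 1/(n:ℝ) else 0) *
            Real.log ((if σmax i = σmax i then 1/(n:ℝ) else 0) / (M i (σmax i) ^ lam)) = _
          rw [if_pos rfl, Real.log_div (by positivity)
            (Real.rpow_pos_of_pos (hMσ i) lam).ne', Real.log_rpow (hMσ i)]
          ring
        · intro j _ hj
          show (if σmax i = j then 1/(n:ℝ) else 0) * _ = 0
          rw [if_neg (fun h => hj h.symm), zero_mul]
        · intro h; exact absurd (Finset.mem_univ _) h
      rw [Finset.sum_congr rfl fun i _ => key i]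
      rw [Finset.sum_sub_distrib, Finset.sum_const, ← Finset.mul_sum, ← Finset.mul_sum, hlogd]
      simp only [Finset.card_univ, Fintype.card_fin, nsmul_eq_mul]
      norm_cast
      field_simp
    · intro i j h
      by_cases hij : σmax i = j
      · exact absurd h (by subst hij; exact (Real.rpow_pos_of_pos (hMσ i) lam).ne')
      · simp [hQ, hij]
  -- the quantitative bound
  have hkey : ∀ lam : ℝ, 0 < lam →
      Mlim lam s t ≤ (Real.log (1/n) + (n:ℝ)^2) / δ / lam := by
    intro lam hlam
    obtain ⟨⟨hP0, hPr, hPc⟩, hminle⟩ := hmin lam hlam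
    set P := Mlim lam with hPdef
    have hle : klDiv P (fun i j => M i j ^ lam) ≤ klDiv Q (fun i j => M i j ^ lam) :=
      hminle Q hQmem
    rw [hQkl lam hlam] at hle
    have hsupp' : ∀ i j, (fun i j => M i j ^ lam) i j = 0 → P i j = 0 := by
      by_contra h
      unfold klDiv at hle
      rw [if_neg h] at hle
      exact (EReal.coe_lt_top _).not_ge hle
    have hsupp : ∀ i j, M i j = 0 → P i j = 0 := fun i j h =>
      hsupp' i j (by simp only; rw [h]; exact Real.zero_rpow hlam.ne')
    have hval : ∑ i, ∑ j, P i j * Real.log (P i j / (M i j ^ lam))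
        ≤ Real.log (1/n) - lam * ((1/n) * Real.log (diagProd M σmax)) := by
      unfold klDiv at hle
      rw [if_pos hsupp'] at hle
      exact_mod_cast hle
    have hid : ∑ i, ∑ j, P i j * Real.log (P i j / (M i j ^ lam))
        = ∑ i, ∑ j, P i j * Real.log (P i j)
          - lam * ∑ i, ∑ j, P i j * Real.log (M i j) := by
      have hterm : ∀ i j, P i j * Real.log (P i j / (M i j ^ lam))
          = P i j * Real.log (P i j) - lam * (P i j * Real.log (M i j)) := by
        intro i j
        rcases (hP0 i j).lt_or_eq with hp|hp
        · have hm : 0 < M i j := by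
            rcases (hM i j).lt_or_eq with h|h
            · exact h
            · exact absurd (hsupp i j h.symm) hp.ne'
          rw [Real.log_div hp.ne' (Real.rpow_pos_of_pos hm lam).ne', Real.log_rpow hm]
          ring
        · rw [← hp]; simp
      simp only [hterm, Finset.sum_sub_distrib, Finset.mul_sum]
    have hent : (-((n:ℝ)^2)) ≤ ∑ i, ∑ j, P i j * Real.log (P i j) := by
      have h2 : ∑ i : Fin n, ∑ j : Fin n, (-1:ℝ) ≤ ∑ i, ∑ j, P i j * Real.log (P i j) :=
        Finset.sum_le_sum fun i _ => Finset.sum_le_sum fun j _ => xlogx_ge_aux _ (hP0 i j)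
      refine le_trans (le_of_eq ?_) h2
      simp only [Finset.sum_const, Finset.card_univ, Fintype.card_fin,
        nsmul_eq_mul, mul_neg, mul_one]
      ring
    have hF : ∑ i, ∑ j, P i j * Real.log (M i j)
        ≤ (1/n) * Real.log (diagProd M σmax) - δ * P s t :=
      birkhoff_bound_aux hn M hM σmax hmax s t δ hδ P hP0 hPr hPc hsupp
    have hfinal : lam * (δ * P s t) ≤ Real.log (1/n) + (n:ℝ)^2 := by
      rw [hid] at hval
      nlinarith [mul_le_mul_of_nonneg_left hF hlam.le]
    rw [div_div, le_div_iff₀ (by positivity)]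
    nlinarith
  have h0 : ∀ᶠ lam in Filter.atTop, (0:ℝ) ≤ Mlim lam s t :=
    Filter.eventually_atTop.2 ⟨1, fun x hx => ((hmin x (by linarith)).1.1 s t)⟩
  have h1 : ∀ᶠ lam in Filter.atTop,
      Mlim lam s t ≤ (Real.log (1/n) + (n:ℝ)^2) / δ / lam :=
    Filter.eventually_atTop.2 ⟨1, fun x hx => hkey x (by linarith)⟩
  exact tendsto_of_tendsto_of_tendsto_of_le_of_le' tendsto_const_nhds
    (Filter.Tendsto.div_atTop tendsto_const_nhds Filter.tendsto_id) h0 h1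
end

section
/- Let M be an n×n nonnegative matrix with at least one positive diagonal, and suppose M has a unique leading diagonal, determined by the permutation σ₀ (i.e., d^M_{σ₀} > d^M_σ for every permutation σ ≠ σ₀). With u = (1/n, …, 1/n) and M^(λ) a minimizer of D_KL(P‖M^[λ]) over P ∈ U(u,u), where (M^[λ])_ij = (M_ij)^λ, the matrices M^(λ) converge entrywise as λ → ∞ to (1/n)·P_{σ₀}, where P_{σ₀} is the permutation matrix of σ₀. -/
/-!
Write `f(P) = Σ P_ij log M_ij` and `Q₀ = (1/n) P_{σ₀}`. On matrices supported in the support of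
`M`, `D_KL(P‖M^[λ]) = Σ P_ij log P_ij - λ f(P)`, and the entropy term is bounded on `U(u,u)`, so
comparing the minimizer `P = M^(λ)` with `Q₀` gives `λ (f(Q₀) - f(P)) ≤ n²`.

By Birkhoff, `n P = Σ_σ w_σ P_σ`, and every `σ` of positive weight is a positive diagonal of `M`.
Then `n f(P)` is the `w`-average of `log d^M_σ`, and `σ₀` beats every other positive diagonal by a
fixed logarithmic gap `g > 0`, so the mass `1 - w_{σ₀}` carried off `σ₀` is at most
`n (f(Q₀) - f(P)) / g`. Since that mass also bounds `n |P_ij - (Q₀)_ij|`, every entry of `P` is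
within `n² / (g λ)` of `Q₀`.
-/

open Real Finset

lemma exists_pos_add_le_of_forall_lt {ι : Type*} [Finite ι] {p : ι → Prop} {a : ι → ℝ} {b : ℝ}
    (h : ∀ i, p i → a i < b) : ∃ ε > 0, ∀ i, p i → a i + ε ≤ b := by
  have hε : ∀ i, ∀ᶠ ε in nhdsWithin (0 : ℝ) (Set.Ioi 0), p i → a i + ε ≤ b := fun i => by
    by_cases hi : p i
    · filter_upwards [nhdsWithin_le_nhds (eventually_lt_nhds (sub_pos.2 (h i hi)))]
        with ε hε _ using by linarith
    · exact Filter.Eventually.of_forall fun _ hi' => absurd hi' hi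
  obtain ⟨ε, hε, hpos⟩ := ((Filter.eventually_all.2 hε).and self_mem_nhdsWithin).exists
  exact ⟨ε, hpos, hε⟩

section ConvexWeights

variable {ι : Type*} [Fintype ι] [DecidableEq ι] {w : ι → ℝ} {i₀ : ι}

lemma sum_erase_eq_one_sub (hw1 : ∑ i, w i = 1) : ∑ i ∈ univ.erase i₀, w i = 1 - w i₀ := by
  rw [sum_erase_eq_sub (mem_univ i₀), hw1]

lemma abs_sum_mul_sub_le {b : ι → ℝ} {C : ℝ} (hw : ∀ i, 0 ≤ w i) (hw1 : ∑ i, w i = 1)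
    (hb : ∀ i, |b i - b i₀| ≤ C) : |∑ i, w i * b i - b i₀| ≤ (1 - w i₀) * C := by
  have hshift : ∑ i, w i * b i - b i₀ = ∑ i ∈ univ.erase i₀, w i * (b i - b i₀) := by
    rw [sum_erase _ (by rw [sub_self, mul_zero])]
    simp only [mul_sub, sum_sub_distrib, ← Finset.sum_mul, hw1, one_mul]
  calc |∑ i, w i * b i - b i₀|
      ≤ ∑ i ∈ univ.erase i₀, w i * |b i - b i₀| := by
        rw [hshift]
        refine (abs_sum_le_sum_abs _ _).trans_eq (sum_congr rfl fun i _ => ?_)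
        rw [abs_mul, abs_of_nonneg (hw i)]
    _ ≤ ∑ i ∈ univ.erase i₀, w i * C :=
        sum_le_sum fun i _ => mul_le_mul_of_nonneg_left (hb i) (hw i)
    _ = (1 - w i₀) * C := by rw [← Finset.sum_mul, sum_erase_eq_one_sub hw1]

lemma mul_one_sub_le_sub_sum_mul {a : ι → ℝ} {g : ℝ} (hw : ∀ i, 0 ≤ w i) (hw1 : ∑ i, w i = 1)
    (ha : ∀ i ≠ i₀, w i ≠ 0 → a i + g ≤ a i₀) : g * (1 - w i₀) ≤ a i₀ - ∑ i, w i * a i := by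
  have hshift : a i₀ - ∑ i, w i * a i = ∑ i ∈ univ.erase i₀, w i * (a i₀ - a i) := by
    rw [sum_erase _ (by rw [sub_self, mul_zero])]
    simp only [mul_sub, sum_sub_distrib, ← Finset.sum_mul, hw1, one_mul]
  rw [hshift, ← sum_erase_eq_one_sub hw1, mul_sum]
  refine sum_le_sum fun i hi => ?_
  rcases eq_or_ne (w i) 0 with h | h
  · simp [h]
  · rw [mul_comm]
    exact mul_le_mul_of_nonneg_left (by linarith [ha i (ne_of_mem_erase hi) h]) (hw i)

end ConvexWeights

lemma permMatrix_apply_eq_ite {ι R : Type*} [DecidableEq ι] [Zero R] [One R] (σ : Equiv.Perm ι)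
    (i j : ι) : σ.permMatrix R i j = if σ i = j then 1 else 0 := by
  simp [Equiv.Perm.permMatrix, PEquiv.toMatrix_apply, Equiv.toPEquiv_apply]

lemma le_apply_of_eq_sum_smul_permMatrix {ι : Type*} [Fintype ι] [DecidableEq ι]
    {A : Matrix ι ι ℝ} {w : Equiv.Perm ι → ℝ} (hw : ∀ σ, 0 ≤ w σ)
    (hA : A = ∑ σ, w σ • σ.permMatrix ℝ) (σ : Equiv.Perm ι) (i : ι) : w σ ≤ A i (σ i) := by
  subst hA
  simp only [Matrix.sum_apply, Matrix.smul_apply, smul_eq_mul]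
  refine le_trans ?_ (single_le_sum (fun τ _ => ?_) (mem_univ σ))
  · simp
  · rw [permMatrix_apply_eq_ite]
    split <;> simp [hw τ]

section TransportPolytope

variable {n : ℕ}

lemma apply_le_of_mem_transportPolytope {m : ℕ} {r : Fin n → ℝ} {c : Fin m → ℝ}
    {P : Matrix (Fin n) (Fin m) ℝ} (hP : P ∈ transportPolytope r c) (i : Fin n) (j : Fin m) :
    P i j ≤ r i :=
  hP.2.1 i ▸ single_le_sum (fun k _ => hP.1 i k) (mem_univ j)

lemma natCast_smul_mem_doublyStochastic {P : Matrix (Fin n) (Fin n) ℝ}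
    (hP : P ∈ transportPolytope (fun _ : Fin n => (1 : ℝ) / n) (fun _ : Fin n => (1 : ℝ) / n)) :
    (n : ℝ) • P ∈ doublyStochastic ℝ (Fin n) := by
  obtain ⟨hP0, hrow, hcol⟩ := hP
  rw [mem_doublyStochastic_iff_sum]
  simp only [Matrix.smul_apply, smul_eq_mul, ← mul_sum, hrow, hcol]
  refine ⟨fun i j => mul_nonneg n.cast_nonneg (hP0 i j), fun i => ?_, fun j => ?_⟩
  · exact mul_one_div_cancel (Nat.cast_ne_zero.2 i.pos.ne')
  · exact mul_one_div_cancel (Nat.cast_ne_zero.2 j.pos.ne')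

lemma inv_natCast_smul_permMatrix_mem_transportPolytope (σ : Equiv.Perm (Fin n)) :
    (n : ℝ)⁻¹ • σ.permMatrix ℝ ∈
      transportPolytope (fun _ : Fin n => (1 : ℝ) / n) (fun _ : Fin n => (1 : ℝ) / n) := by
  refine ⟨fun i j => ?_, fun i => ?_, fun j => ?_⟩ <;>
    simp only [Matrix.smul_apply, permMatrix_apply_eq_ite, smul_eq_mul, mul_ite, mul_one, mul_zero]
  · split <;> positivity
  · simp
  · simp [← Equiv.eq_symm_apply]

end TransportPolytope

noncomputable def logPairing {n m : ℕ} (M : Matrix (Fin n) (Fin m) ℝ) :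
    Matrix (Fin n) (Fin m) ℝ →ₗ[ℝ] ℝ where
  toFun P := ∑ i, ∑ j, P i j * log (M i j)
  map_add' P Q := by simp only [Matrix.add_apply, add_mul, sum_add_distrib]
  map_smul' c P := by
    simp only [Matrix.smul_apply, smul_eq_mul, mul_assoc, mul_sum, RingHom.id_apply]

lemma logPairing_apply {n m : ℕ} (M P : Matrix (Fin n) (Fin m) ℝ) :
    logPairing M P = ∑ i, ∑ j, P i j * log (M i j) :=
  rfl

lemma logPairing_permMatrix {n : ℕ} (M : Matrix (Fin n) (Fin n) ℝ) {σ : Equiv.Perm (Fin n)}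
    (hσ : diagProd M σ ≠ 0) : logPairing M (σ.permMatrix ℝ) = log (diagProd M σ) := by
  rw [diagProd, log_prod fun i _ => prod_ne_zero_iff.1 hσ i (mem_univ i)]
  simp [logPairing_apply]

section RelativeEntropy

variable {n m : ℕ} {M P Q : Matrix (Fin n) (Fin m) ℝ} {lam : ℝ}

lemma klDiv_rpow_eq (hM : ∀ i j, 0 ≤ M i j) (hlam : 0 < lam) (hP : ∀ i j, M i j = 0 → P i j = 0) :
    klDiv P (fun i j => M i j ^ lam) =
      ((∑ i, ∑ j, P i j * log (P i j) - lam * logPairing M P : ℝ) : EReal) := by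
  have hsupp : ∀ i j, M i j ^ lam = 0 → P i j = 0 :=
    fun i j h => hP i j ((rpow_eq_zero (hM i j) hlam.ne').1 h)
  unfold klDiv
  rw [if_pos hsupp, logPairing_apply, mul_sum]
  simp only [mul_sum, ← sum_sub_distrib]
  congr 1
  refine sum_congr rfl fun i _ => sum_congr rfl fun j _ => ?_
  by_cases hPij : P i j = 0
  · simp [hPij]
  have hMij : 0 < M i j := (hM i j).lt_of_ne' fun h => hPij (hP i j h)
  rw [log_div hPij (rpow_pos_of_pos hMij lam).ne', log_rpow hMij]
  ring

lemma eq_zero_of_klDiv_rpow_le (hM : ∀ i j, 0 ≤ M i j) (hlam : 0 < lam)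
    (hQ : ∀ i j, M i j = 0 → Q i j = 0)
    (hle : klDiv P (fun i j => M i j ^ lam) ≤ klDiv Q (fun i j => M i j ^ lam)) :
    ∀ i j, M i j = 0 → P i j = 0 := by
  intro i j hij
  by_contra hPij
  rw [klDiv_rpow_eq hM hlam hQ] at hle
  unfold klDiv at hle
  rw [if_neg fun h => hPij (h i j ((rpow_eq_zero (hM i j) hlam.ne').2 hij)), top_le_iff] at hle
  exact EReal.coe_ne_top _ hle

lemma mul_logPairing_sub_le_of_klDiv_rpow_le (hM : ∀ i j, 0 ≤ M i j) (hlam : 0 < lam)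
    (hP : ∀ i j, 0 ≤ P i j) (hPM : ∀ i j, M i j = 0 → P i j = 0)
    (hQ : ∀ i j, Q i j ∈ Set.Icc 0 1) (hQM : ∀ i j, M i j = 0 → Q i j = 0)
    (hle : klDiv P (fun i j => M i j ^ lam) ≤ klDiv Q (fun i j => M i j ^ lam)) :
    lam * (logPairing M Q - logPairing M P) ≤ n * m := by
  rw [klDiv_rpow_eq hM hlam hPM, klDiv_rpow_eq hM hlam hQM, EReal.coe_le_coe_iff] at hle
  have hPent : -(n * m : ℝ) ≤ ∑ i, ∑ j, P i j * log (P i j) := by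
    have := sum_le_sum fun i (_ : i ∈ univ) => sum_le_sum fun j (_ : j ∈ univ) =>
      (by linarith [self_sub_one_le_mul_log (hP i j), hP i j] : (-1 : ℝ) ≤ P i j * log (P i j))
    simpa using this
  have hQent : ∑ i, ∑ j, Q i j * log (Q i j) ≤ 0 :=
    sum_nonpos fun i _ => sum_nonpos fun j _ => mul_log_nonpos (hQ i j).1 (hQ i j).2
  linarith

end RelativeEntropy

lemma mul_abs_sub_le_logPairing_sub {n : ℕ} {M P : Matrix (Fin n) (Fin n) ℝ}
    (hM : ∀ i j, 0 ≤ M i j)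
    (hP : P ∈ transportPolytope (fun _ : Fin n => (1 : ℝ) / n) (fun _ : Fin n => (1 : ℝ) / n))
    (hPM : ∀ i j, M i j = 0 → P i j = 0) {σ₀ : Equiv.Perm (Fin n)} (hσ₀ : 0 < diagProd M σ₀)
    {g : ℝ} (hg : 0 ≤ g)
    (hgap : ∀ σ ≠ σ₀, 0 < diagProd M σ → log (diagProd M σ) + g ≤ log (diagProd M σ₀))
    (i j : Fin n) :
    g * |P i j - ((n : ℝ)⁻¹ • σ₀.permMatrix ℝ) i j| ≤
      logPairing M ((n : ℝ)⁻¹ • σ₀.permMatrix ℝ) - logPairing M P := by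
  obtain ⟨w, hw0, hw1, hw⟩ :=
    exists_eq_sum_perm_of_mem_doublyStochastic (natCast_smul_mem_doublyStochastic hP)
  have hn : (0 : ℝ) < n := Nat.cast_pos.2 i.pos
  -- a permutation of positive weight lies in the support of `P`, hence on a positive diagonal
  have hdiag : ∀ σ, w σ ≠ 0 → 0 < diagProd M σ := fun σ hσ =>
    prod_pos fun k _ => (hM k (σ k)).lt_of_ne' fun hMk => hσ <| by
      have hle := le_apply_of_eq_sum_smul_permMatrix hw0 hw.symm σ k
      rw [Matrix.smul_apply, hPM _ _ hMk, smul_zero] at hle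
      exact le_antisymm hle (hw0 σ)
  have hdev : |∑ σ, w σ * σ.permMatrix ℝ i j - σ₀.permMatrix ℝ i j| ≤ (1 - w σ₀) * 1 :=
    abs_sum_mul_sub_le hw0 hw1 fun σ => by
      simp only [permMatrix_apply_eq_ite]
      split_ifs <;> norm_num
  have hmass : g * (1 - w σ₀) ≤ logPairing M (σ₀.permMatrix ℝ) -
      ∑ σ, w σ * logPairing M (σ.permMatrix ℝ) :=
    mul_one_sub_le_sub_sum_mul (a := fun σ => logPairing M (σ.permMatrix ℝ)) hw0 hw1
      fun σ hσ hwσ => by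
      rw [logPairing_permMatrix M (hdiag σ hwσ).ne', logPairing_permMatrix M hσ₀.ne']
      exact hgap σ hσ (hdiag σ hwσ)
  rw [← inv_smul_smul₀ hn.ne' P, ← hw]
  simp only [map_smul, map_sum, Matrix.smul_apply, Matrix.sum_apply, smul_eq_mul, ← mul_sub,
    abs_mul, abs_of_pos (inv_pos.2 hn)]
  calc g * ((n : ℝ)⁻¹ * |∑ σ, w σ * σ.permMatrix ℝ i j - σ₀.permMatrix ℝ i j|)
      = (n : ℝ)⁻¹ * (g * |∑ σ, w σ * σ.permMatrix ℝ i j - σ₀.permMatrix ℝ i j|) := by ring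
    _ ≤ (n : ℝ)⁻¹ * (logPairing M (σ₀.permMatrix ℝ) -
          ∑ σ, w σ * logPairing M (σ.permMatrix ℝ)) := by
      gcongr
      linarith [mul_le_mul_of_nonneg_left hdev hg]

lemma abs_sub_le_of_klDiv_rpow_le {n : ℕ} {M P : Matrix (Fin n) (Fin n) ℝ}
    (hM : ∀ i j, 0 ≤ M i j)
    (hP : P ∈ transportPolytope (fun _ : Fin n => (1 : ℝ) / n) (fun _ : Fin n => (1 : ℝ) / n))
    {σ₀ : Equiv.Perm (Fin n)} (hσ₀ : 0 < diagProd M σ₀) {g : ℝ} (hg : 0 < g)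
    (hgap : ∀ σ ≠ σ₀, 0 < diagProd M σ → log (diagProd M σ) + g ≤ log (diagProd M σ₀))
    {lam : ℝ} (hlam : 0 < lam)
    (hle : klDiv P (fun i j => M i j ^ lam) ≤
      klDiv ((n : ℝ)⁻¹ • σ₀.permMatrix ℝ) (fun i j => M i j ^ lam)) (i j : Fin n) :
    |P i j - ((n : ℝ)⁻¹ • σ₀.permMatrix ℝ) i j| ≤ n * n / g / lam := by
  set Q₀ : Matrix (Fin n) (Fin n) ℝ := (n : ℝ)⁻¹ • σ₀.permMatrix ℝ
  have hQ₀ := inv_natCast_smul_permMatrix_mem_transportPolytope σ₀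
  have hQ₀M : ∀ i j, M i j = 0 → Q₀ i j = 0 := fun i j hij => by
    have : σ₀ i ≠ j := by
      rintro rfl
      exact prod_ne_zero_iff.1 hσ₀.ne' i (mem_univ i) hij
    simp [Q₀, this]
  have hPM := eq_zero_of_klDiv_rpow_le hM hlam hQ₀M hle
  have hclose := mul_abs_sub_le_logPairing_sub hM hP hPM hσ₀ hg.le hgap i j
  have hKL := mul_logPairing_sub_le_of_klDiv_rpow_le hM hlam hP.1 hPM
    (fun i j => ⟨hQ₀.1 i j, (apply_le_of_mem_transportPolytope hQ₀ i j).trans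
      (one_div (n : ℝ) ▸ Nat.cast_inv_le_one n)⟩) hQ₀M hle
  rw [div_div, le_div_iff₀ (by positivity)]
  nlinarith

/-- If the nonnegative matrix `M` has at least one positive diagonal and a unique
leading diagonal, determined by `σ₀`, then the minimizers `Mlim λ` of
`D_KL(P‖M^[λ])` over `U(u,u)` (`u` uniform, `M^[λ]` the entrywise `λ`-power) converge
entrywise as `λ → ∞` to `(1/n)` times the permutation matrix of `σ₀`. -/
theorem convergence_to_unique_leading_diagonal {n : ℕ}
    (M : Matrix (Fin n) (Fin n) ℝ) (hM : ∀ i j, 0 ≤ M i j)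
    (σ₀ : Equiv.Perm (Fin n)) (hσ₀pos : 0 < diagProd M σ₀)
    (hlead : ∀ σ : Equiv.Perm (Fin n), σ ≠ σ₀ → diagProd M σ < diagProd M σ₀)
    (Mlim : ℝ → Matrix (Fin n) (Fin n) ℝ)
    (hmin : ∀ lam : ℝ, 0 < lam →
      Mlim lam ∈ transportPolytope (fun _ : Fin n => (1 : ℝ) / n) (fun _ : Fin n => (1 : ℝ) / n) ∧
      ∀ Q ∈ transportPolytope (fun _ : Fin n => (1 : ℝ) / n) (fun _ : Fin n => (1 : ℝ) / n),
        klDiv (Mlim lam) (fun i j => M i j ^ lam) ≤ klDiv Q (fun i j => M i j ^ lam)) :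
    Filter.Tendsto Mlim Filter.atTop
      (nhds (fun i j => if σ₀ i = j then (1 : ℝ) / n else 0)) := by
  have hlimit : (fun i j => if σ₀ i = j then (1 : ℝ) / n else 0) =
      (n : ℝ)⁻¹ • σ₀.permMatrix ℝ := by
    ext i j
    simp
  obtain ⟨g, hg, hgap⟩ := exists_pos_add_le_of_forall_lt
    (p := fun σ => σ ≠ σ₀ ∧ 0 < diagProd M σ) (a := fun σ => log (diagProd M σ))
    fun σ hσ => log_lt_log hσ.2 (hlead σ hσ.1)
  rw [hlimit]
  refine tendsto_pi_nhds.2 fun i => tendsto_pi_nhds.2 fun j => ?_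
  rw [tendsto_iff_norm_sub_tendsto_zero]
  refine squeeze_zero' (Filter.Eventually.of_forall fun _ => norm_nonneg _)
    ((Filter.eventually_gt_atTop 0).mono fun lam hlam => ?_)
    (tendsto_const_nhds (x := (n * n / g : ℝ)).div_atTop Filter.tendsto_id)
  obtain ⟨hP, hopt⟩ := hmin lam hlam
  exact abs_sub_le_of_klDiv_rpow_le hM hP hσ₀pos hg (fun σ h₁ h₂ => hgap σ ⟨h₁, h₂⟩) hlam
    (hopt _ (inv_natCast_smul_permMatrix_mem_transportPolytope σ₀)) i j
end

section
/- Let M be an n×n nonnegative matrix and let P be an n×n doubly stochastic matrix (nonnegative, all row sums and column sums equal to 1) such that P_ij = 0 whenever M_ij = 0. If the entry position (s,t) does not belong to any positive diagonal of M (i.e., there is no permutation σ with σ(s) = t and Π_i M_{i,σ(i)} > 0), then P_{st} = 0. -/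
/-- If a doubly stochastic matrix `P` vanishes wherever the nonnegative matrix `M`
vanishes, and the position `(s,t)` belongs to no positive diagonal of `M`,
then `P s t = 0`. -/
theorem doublyStochastic_vanishes_off_positive_diagonals {n : ℕ}
    (M P : Matrix (Fin n) (Fin n) ℝ)
    (hM : ∀ i j, 0 ≤ M i j)
    (hP0 : ∀ i j, 0 ≤ P i j)
    (hProw : ∀ i, ∑ j, P i j = 1)
    (hPcol : ∀ j, ∑ i, P i j = 1)
    (hsupp : ∀ i j, M i j = 0 → P i j = 0)
    (s t : Fin n)
    (hst : ¬ ∃ σ : Equiv.Perm (Fin n), σ s = t ∧ 0 < ∏ i, M i (σ i)) :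
    P s t = 0 := by
  have hPmem : P ∈ doublyStochastic ℝ (Fin n) := by
    rw [mem_doublyStochastic_iff_sum]
    exact ⟨fun i j => hP0 i j, hProw, hPcol⟩
  obtain ⟨w, hw0, hw1, hwP⟩ := exists_eq_sum_perm_of_mem_doublyStochastic hPmem
  by_contra hPst
  have hPst' : 0 < P s t := lt_of_le_of_ne (hP0 s t) (Ne.symm hPst)
  -- entry formula
  have entry : ∀ i j, P i j = ∑ σ : Equiv.Perm (Fin n), if σ i = j then w σ else 0 := by
    intro i j
    rw [← hwP]
    simp [Matrix.sum_apply, Equiv.Perm.permMatrix, PEquiv.toMatrix_apply,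
      Equiv.toPEquiv_apply, Matrix.smul_apply]
  have hex : ∃ σ : Equiv.Perm (Fin n), σ s = t ∧ 0 < w σ := by
    by_contra h
    push_neg at h
    have : P s t = 0 := by
      rw [entry s t]
      apply Finset.sum_eq_zero
      intro σ _
      by_cases hσ : σ s = t
      · have := h σ hσ
        have : w σ = 0 := le_antisymm this (hw0 σ)
        simp [this]
      · simp [hσ]
    exact hPst this
  obtain ⟨σ, hσs, hσw⟩ := hex
  apply hst
  refine ⟨σ, hσs, ?_⟩
  apply Finset.prod_pos
  intro i _
  have hPi : 0 < P i (σ i) := by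
    rw [entry i (σ i)]
    calc 0 < w σ := hσw
    _ = (if σ i = σ i then w σ else 0) := by simp
    _ ≤ ∑ τ : Equiv.Perm (Fin n), if τ i = σ i then w τ else 0 := by
        apply Finset.single_le_sum (f := fun τ : Equiv.Perm (Fin n) => if τ i = σ i then w τ else 0)
        · intro τ _
          split
          · exact hw0 τ
          · exact le_refl 0
        · exact Finset.mem_univ σ
  rcases lt_or_eq_of_le (hM i (σ i)) with h | h
  · exact h
  · exact absurd (hsupp i (σ i) h.symm) (ne_of_gt hPi)
end
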